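/- arXiv:1504.08292 — 4 statements merged into one kernel-verified Lean document; each statement's English description precedes it below -/
import Mathlib

section
/- Let s ∈ (0,1) and define w(x) = (max(x,0))^s on ℝ. Then the principal-value integral ∫_ℝ (w(1+t) + w(1−t) − 2w(1))/|t|^{1+2s} dt equals 0; that is, the fractional Laplacian of x ↦ x₊^s vanishes at the point x = 1. -/
open Set MeasureTheory intervalIntegral Filter Real Topology

namespace Stmt1Aux

noncomputable def N (s t : ℝ) : ℝ := max (1+t) 0 ^ s + max (1-t) 0 ^ s - 2
noncomputable def f (s t : ℝ) : ℝ := N s t / |t| ^ (1+2*s)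
noncomputable def k (s u : ℝ) : ℝ := (1-u) ^ (s-1) * u ^ (-(2*s))
noncomputable def h1f (s t : ℝ) : ℝ := (1+t) ^ (s-1) * t ^ (-(2*s))
noncomputable def G1 (s t : ℝ) : ℝ := -(((1+t) ^ s + (1-t) ^ s - 2) * t ^ (-(2*s)) / (2*s))
noncomputable def G2 (s t : ℝ) : ℝ := -(((1+t) ^ s - 2) * t ^ (-(2*s)) / (2*s))

variable {s : ℝ}

lemma N_eq' {t : ℝ} (h1 : -1 ≤ t) (h2 : t ≤ 1) : N s t = (1+t) ^ s + (1-t) ^ s - 2 := by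
  rw [N, max_eq_left (by linarith : (0:ℝ) ≤ 1+t), max_eq_left (by linarith : (0:ℝ) ≤ 1-t)]




lemma continuous_N {s : ℝ} (hs0 : 0 < s) : Continuous (N s) := by
  have h1 : Continuous fun t : ℝ => max (1+t) 0 ^ s := by
    rw [continuous_iff_continuousAt]
    intro x
    exact (((continuous_const.add continuous_id).max continuous_const).continuousAt).rpow_const
      (Or.inr hs0.le)
  have h2 : Continuous fun t : ℝ => max (1-t) 0 ^ s := by
    rw [continuous_iff_continuousAt]
    intro x
    exact (((continuous_const.sub continuous_id).max continuous_const).continuousAt).rpow_const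
      (Or.inr hs0.le)
  exact (h1.add h2).sub continuous_const

lemma measurable_f {s : ℝ} (hs0 : 0 < s) : Measurable (f s) := by
  have hd : Continuous fun t : ℝ => |t| ^ (1+2*s) := by
    rw [continuous_iff_continuousAt]
    intro x
    exact (continuous_abs.continuousAt).rpow_const (Or.inr (by linarith))
  exact ((continuous_N hs0).measurable).div hd.measurable

lemma N_nonpos {s t : ℝ} (hs0 : 0 < s) (hs1 : s < 1) (ht : |t| ≤ 1) : N s t ≤ 0 := by
  have h1 : (0:ℝ) ≤ 1 + t := by cases abs_le.mp ht; linarith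
  have h2 : (0:ℝ) ≤ 1 - t := by cases abs_le.mp ht; linarith
  have hcc := (Real.strictConcaveOn_rpow hs0 hs1).concaveOn
  have key := hcc.2 (mem_Ici.mpr h1) (mem_Ici.mpr h2)
    (by norm_num : (0:ℝ) ≤ (1:ℝ)/2) (by norm_num : (0:ℝ) ≤ (1:ℝ)/2) (by norm_num)
  simp only [smul_eq_mul] at key
  have he : (1:ℝ)/2*(1+t) + 1/2*(1-t) = 1 := by ring
  rw [he, Real.one_rpow] at key
  have : max (1+t) 0 = 1 + t := max_eq_left h1
  have h2' : max (1-t) 0 = 1 - t := max_eq_left h2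
  rw [N, this, h2']
  linarith







lemma hda (hs0 : 0 < s) {t : ℝ} (ht : -1 < t) :
    HasDerivAt (fun t : ℝ => (1+t) ^ s) (s * (1+t) ^ (s-1)) t := by
  have h : HasDerivAt (fun t : ℝ => 1 + t) 1 t := (hasDerivAt_id t).const_add 1
  have := h.rpow_const (p := s) (Or.inl (by linarith))
  simpa using this

lemma hdb (hs0 : 0 < s) {t : ℝ} (ht : t < 1) :
    HasDerivAt (fun t : ℝ => (1-t) ^ s) (-(s * (1-t) ^ (s-1))) t := by
  have h : HasDerivAt (fun t : ℝ => 1 - t) (-1) t := (hasDerivAt_id t).neg.const_add 1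
  have := h.rpow_const (p := s) (Or.inl (by intro h'; linarith [h', sub_pos.mpr ht] ; ))
  simpa using this.neg.neg

lemma quad_bound (hs0 : 0 < s) (hs1 : s < 1) {t : ℝ} (ht : |t| ≤ 1/2) :
    2 - (1+t) ^ s - (1-t) ^ s ≤ 4 * t^2 := by
  obtain ⟨htl, htr⟩ := abs_le.mp ht
  set g : ℝ → ℝ := fun t => (1+t) ^ s + (1-t) ^ s - 2 + 4*t^2 with hg
  set g1 : ℝ → ℝ := fun t => s * (1+t) ^ (s-1) - s * (1-t) ^ (s-1) + 8*t with hg1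
  -- derivative of g
  have hdg : ∀ x ∈ Icc (-(1/2):ℝ) (1/2), HasDerivAt g (g1 x) x := by
    intro x hx
    obtain ⟨h1, h2⟩ := hx
    have ha := hda hs0 (by linarith : -1 < x)
    have hb := hdb hs0 (by linarith : x < 1)
    have hq : HasDerivAt (fun t : ℝ => 4*t^2) (8*x) x := by
      have := ((hasDerivAt_pow 2 x).const_mul (4:ℝ))
      simpa using this.congr_deriv (by ring)
    exact (((ha.add hb).sub_const 2).add hq).congr_deriv (by simp only [hg1]; ring)
  -- derivative of g1
  have hdg1 : ∀ x ∈ Icc (-(1/2):ℝ) (1/2),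
      HasDerivAt g1 (s * ((s-1) * (1+x) ^ (s-2)) + s * ((s-1) * (1-x) ^ (s-2)) + 8) x := by
    intro x hx
    obtain ⟨h1, h2⟩ := hx
    have hx1 : (0:ℝ) < 1 + x := by linarith
    have hx2 : (0:ℝ) < 1 - x := by linarith
    have ha : HasDerivAt (fun t : ℝ => (1+t) ^ (s-1)) ((s-1) * (1+x) ^ (s-1-1)) x := by
      have h : HasDerivAt (fun t : ℝ => 1 + t) 1 x := (hasDerivAt_id x).const_add 1
      simpa using h.rpow_const (p := s-1) (Or.inl hx1.ne')
    have h : HasDerivAt (fun t : ℝ => 1 - t) (-1) x := (hasDerivAt_id x).neg.const_add 1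
    have hb := h.rpow_const (p := s-1) (Or.inl hx2.ne')
    have hl : HasDerivAt (fun t : ℝ => 8*t) (8:ℝ) x := by
      simpa using (hasDerivAt_id x).const_mul (8:ℝ)
    have hcomb := ((ha.const_mul s).sub (hb.const_mul s)).add hl
    refine hcomb.congr_deriv ?_
    rw [show s-1-1 = s-2 by ring]
    ring
  -- second derivative is positive
  have hpos : ∀ x ∈ Icc (-(1/2):ℝ) (1/2),
      0 < s * ((s-1) * (1+x) ^ (s-2)) + s * ((s-1) * (1-x) ^ (s-2)) + 8 := by
    intro x hx
    obtain ⟨h1, h2⟩ := hx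
    have hx1 : (1/2:ℝ) ≤ 1 + x := by linarith
    have hx2 : (1/2:ℝ) ≤ 1 - x := by linarith
    have hb1 : (1+x) ^ (s-2) ≤ (1/2:ℝ) ^ (s-2) :=
      Real.rpow_le_rpow_of_nonpos (by norm_num) hx1 (by linarith)
    have hb2 : (1-x) ^ (s-2) ≤ (1/2:ℝ) ^ (s-2) :=
      Real.rpow_le_rpow_of_nonpos (by norm_num) hx2 (by linarith)
    have hhalf : ((1/2:ℝ)) ^ (s-2) ≤ 4 := by
      have h12 : ((1/2:ℝ)) ^ (s-2) = 2 ^ (2-s) := by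
        rw [show (1/2:ℝ) = 2⁻¹ by norm_num, Real.inv_rpow (by norm_num : (0:ℝ) ≤ 2),
          ← Real.rpow_neg (by norm_num : (0:ℝ) ≤ 2), show -(s-2) = 2-s by ring]
      rw [h12]
      calc (2:ℝ) ^ (2-s) ≤ 2 ^ (2:ℝ) :=
            Real.rpow_le_rpow_of_exponent_le (by norm_num) (by linarith)
        _ = 4 := by
            rw [show (2:ℝ) = ((2:ℕ):ℝ) by norm_num, Real.rpow_natCast]; norm_num
    have hp1 : (0:ℝ) < (1+x) ^ (s-2) := Real.rpow_pos_of_pos (by linarith) _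
    have hp2 : (0:ℝ) < (1-x) ^ (s-2) := Real.rpow_pos_of_pos (by linarith) _
    nlinarith [mul_pos hs0 (sub_pos.mpr hs1), sq_nonneg (s - 1/2)]
  -- g1 is strictly monotone on the interval
  have hmono : StrictMonoOn g1 (Icc (-(1/2):ℝ) (1/2)) := by
    apply strictMonoOn_of_deriv_pos (convex_Icc _ _)
    · exact fun x hx => ((hdg1 x hx).continuousAt).continuousWithinAt
    · intro x hx
      rw [interior_Icc] at hx
      rw [(hdg1 x (Ioo_subset_Icc_self hx)).deriv]
      exact hpos x (Ioo_subset_Icc_self hx)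
  have hg1zero : g1 0 = 0 := by simp [hg1]
  have hg0 : g 0 = 0 := by
    simp only [hg]
    norm_num
  -- conclude g t ≥ 0
  have hge : 0 ≤ g t := by
    rcases le_total 0 t with h | h
    · have hmg : MonotoneOn g (Icc (0:ℝ) (1/2)) := by
        refine monotoneOn_of_deriv_nonneg (convex_Icc _ _) ?_ ?_ ?_
        · exact fun x hx => ((hdg x ⟨by linarith [hx.1], hx.2⟩).continuousAt).continuousWithinAt
        · intro x hx
          rw [interior_Icc] at hx
          exact ((hdg x ⟨by linarith [hx.1.le], hx.2.le⟩).differentiableAt).differentiableWithinAt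
        · intro x hx
          rw [interior_Icc] at hx
          rw [(hdg x ⟨by linarith [hx.1.le], hx.2.le⟩).deriv]
          have := hmono (show (0:ℝ) ∈ Icc (-(1/2):ℝ) (1/2) by norm_num)
            (show x ∈ Icc (-(1/2):ℝ) (1/2) by constructor <;> [linarith [hx.1.le]; linarith [hx.2.le]])
            hx.1
          rw [hg1zero] at this
          exact this.le
      have := hmg (left_mem_Icc.mpr (by norm_num)) ⟨h, htr⟩ h
      rwa [hg0] at this
    · have hmg : AntitoneOn g (Icc (-(1/2):ℝ) 0) := by
        refine antitoneOn_of_deriv_nonpos (convex_Icc _ _) ?_ ?_ ?_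
        · exact fun x hx => ((hdg x ⟨hx.1, by linarith [hx.2]⟩).continuousAt).continuousWithinAt
        · intro x hx
          rw [interior_Icc] at hx
          exact ((hdg x ⟨hx.1.le, by linarith [hx.2.le]⟩).differentiableAt).differentiableWithinAt
        · intro x hx
          rw [interior_Icc] at hx
          rw [(hdg x ⟨hx.1.le, by linarith [hx.2.le]⟩).deriv]
          have := hmono
            (show x ∈ Icc (-(1/2):ℝ) (1/2) by constructor <;> [exact hx.1.le; linarith [hx.2.le]])
            (show (0:ℝ) ∈ Icc (-(1/2):ℝ) (1/2) by norm_num)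
            hx.2
          rw [hg1zero] at this
          exact this.le
      have := hmg ⟨htl, h⟩ (right_mem_Icc.mpr (by norm_num)) h
      rwa [hg0] at this
  simp only [hg] at hge
  linarith








lemma N_eq_big {t : ℝ} (hs0 : 0 < s) (h1 : 1 ≤ t) : N s t = (1+t) ^ s - 2 := by
  rw [N, max_eq_left (by linarith : (0:ℝ) ≤ 1+t), max_eq_right (by linarith : 1-t ≤ 0),
    Real.zero_rpow hs0.ne']
  ring

lemma contOn_f (hs0 : 0 < s) : ContinuousOn (f s) {t : ℝ | 0 < t} := by
  apply ContinuousOn.div ((continuous_N hs0).continuousOn)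
  · apply ContinuousOn.rpow_const continuous_abs.continuousOn
    intro x hx
    exact Or.inl (by simp only [mem_setOf_eq] at hx; positivity)
  · intro x hx
    simp only [mem_setOf_eq] at hx
    positivity

lemma intervalIntegrable_f (hs0 : 0 < s) {a b : ℝ} (ha : 0 < a) (hb : 0 < b) :
    IntervalIntegrable (f s) volume a b := by
  apply ContinuousOn.intervalIntegrable
  apply (contOn_f hs0).mono
  intro x hx
  rcases le_total a b with h | h
  · rw [uIcc_of_le h] at hx; exact lt_of_lt_of_le ha hx.1
  · rw [uIcc_of_ge h] at hx; exact lt_of_lt_of_le hb hx.1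

lemma contOn_h1f : ContinuousOn (h1f s) {t : ℝ | 0 < t} := by
  apply ContinuousOn.mul
  · apply ContinuousOn.rpow_const (continuous_const.add continuous_id').continuousOn
    intro x hx
    simp only [mem_setOf_eq] at hx
    exact Or.inl (by show (1:ℝ) + x ≠ 0; positivity)
  · apply ContinuousOn.rpow_const continuous_id'.continuousOn
    intro x hx
    simp only [mem_setOf_eq] at hx
    exact Or.inl (by positivity)

lemma contOn_k : ContinuousOn (k s) (Ioo (0:ℝ) 1) := by
  apply ContinuousOn.mul
  · apply ContinuousOn.rpow_const (continuous_const.sub continuous_id').continuousOn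
    intro x hx
    refine Or.inl ?_
    have : x < 1 := hx.2
    intro h
    change (1:ℝ) - x = 0 at h
    rw [sub_eq_zero] at h
    exact absurd h.symm (ne_of_lt this)
  · apply ContinuousOn.rpow_const continuous_id'.continuousOn
    intro x hx
    exact Or.inl (ne_of_gt hx.1)

lemma intervalIntegrable_k_to_one (hs0 : 0 < s) (hs1 : s < 1) {a : ℝ} (ha : 0 < a) (ha1 : a ≤ 1) :
    IntervalIntegrable (k s) volume a 1 := by
  have h1 : IntervalIntegrable (fun u : ℝ => (1-u) ^ (s-1)) volume a 1 := by
    have := intervalIntegral.intervalIntegrable_rpow' (a := 0) (b := 1-a) (r := s-1)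
      (by linarith)
    have h := (this.comp_sub_left 1).symm
    simpa using h
  have h2 : ContinuousOn (fun u : ℝ => u ^ (-(2*s))) (uIcc a 1) := by
    apply ContinuousOn.rpow_const continuous_id'.continuousOn
    intro x hx
    rw [uIcc_of_le ha1] at hx
    exact Or.inl (ne_of_gt (lt_of_lt_of_le ha hx.1))
  exact h1.mul_continuousOn h2

lemma hasDerivAt_G1 (hs0 : 0 < s) {x : ℝ} (hx0 : 0 < x) (hx1 : x < 1) :
    HasDerivAt (G1 s) (f s x - (1/2)*(h1f s x) + (1/2)*(k s x)) x := by
  have hd_D : HasDerivAt (fun t : ℝ => (1+t) ^ s + (1-t) ^ s - 2)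
      (s * (1+x) ^ (s-1) + -(s * (1-x) ^ (s-1))) x :=
    ((hda hs0 (by linarith)).add (hdb hs0 hx1)).sub_const 2
  have hd_P : HasDerivAt (fun t : ℝ => t ^ (-(2*s))) (-(2*s) * x ^ (-(2*s)-1)) x :=
    Real.hasDerivAt_rpow_const (Or.inl hx0.ne')
  have hcomb := ((hd_D.mul hd_P).div_const (2*s)).neg
  refine hcomb.congr_deriv ?_
  -- algebra
  have habs : |x| = x := abs_of_pos hx0
  have hP : (0:ℝ) < x ^ (-(2*s)) := Real.rpow_pos_of_pos hx0 _
  have h1 : x ^ (-(2*s)-1) = x ^ (-(2*s)) / x := by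
    rw [Real.rpow_sub hx0, Real.rpow_one]
  have h2 : x ^ (1+2*s) = x / x ^ (-(2*s)) := by
    rw [eq_div_iff hP.ne', ← Real.rpow_add hx0]
    norm_num
  rw [f, N_eq' (by linarith) (by linarith), habs, h1, h2, h1f, k]
  field_simp
  ring

lemma hasDerivAt_G2 (hs0 : 0 < s) {x : ℝ} (hx1 : 1 < x) :
    HasDerivAt (G2 s) (f s x - (1/2)*(h1f s x)) x := by
  have hx0 : (0:ℝ) < x := by linarith
  have hd_D : HasDerivAt (fun t : ℝ => (1+t) ^ s - 2) (s * (1+x) ^ (s-1)) x :=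
    (hda hs0 (by linarith)).sub_const 2
  have hd_P : HasDerivAt (fun t : ℝ => t ^ (-(2*s))) (-(2*s) * x ^ (-(2*s)-1)) x :=
    Real.hasDerivAt_rpow_const (Or.inl hx0.ne')
  have hcomb := ((hd_D.mul hd_P).div_const (2*s)).neg
  refine hcomb.congr_deriv ?_
  have habs : |x| = x := abs_of_pos hx0
  have hP : (0:ℝ) < x ^ (-(2*s)) := Real.rpow_pos_of_pos hx0 _
  have h1 : x ^ (-(2*s)-1) = x ^ (-(2*s)) / x := by
    rw [Real.rpow_sub hx0, Real.rpow_one]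
  have h2 : x ^ (1+2*s) = x / x ^ (-(2*s)) := by
    rw [eq_div_iff hP.ne', ← Real.rpow_add hx0]
    norm_num
  rw [f, N_eq_big hs0 hx1.le, habs, h1, h2, h1f]
  field_simp
  ring

lemma contOn_G1 (hs0 : 0 < s) : ContinuousOn (G1 s) {t : ℝ | 0 < t} := by
  apply ContinuousOn.neg
  apply ContinuousOn.div_const
  apply ContinuousOn.mul
  · apply ContinuousOn.sub
    apply ContinuousOn.add
    · apply ContinuousOn.rpow_const (continuous_const.add continuous_id').continuousOn
      intro x hx; exact Or.inr hs0.le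
    · apply ContinuousOn.rpow_const (continuous_const.sub continuous_id').continuousOn
      intro x hx; exact Or.inr hs0.le
    · exact continuousOn_const
  · apply ContinuousOn.rpow_const continuous_id'.continuousOn
    intro x hx
    simp only [mem_setOf_eq] at hx
    exact Or.inl (ne_of_gt hx)

lemma contOn_G2 (hs0 : 0 < s) : ContinuousOn (G2 s) {t : ℝ | 0 < t} := by
  apply ContinuousOn.neg
  apply ContinuousOn.div_const
  apply ContinuousOn.mul
  · apply ContinuousOn.sub
    · apply ContinuousOn.rpow_const (continuous_const.add continuous_id').continuousOn
      intro x hx; exact Or.inr hs0.le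
    · exact continuousOn_const
  · apply ContinuousOn.rpow_const continuous_id'.continuousOn
    intro x hx
    simp only [mem_setOf_eq] at hx
    exact Or.inl (ne_of_gt hx)

lemma ftc1 (hs0 : 0 < s) (hs1 : s < 1) {ε : ℝ} (hε : 0 < ε) (hε1 : ε ≤ 1/2) :
    ∫ t in ε..1, f s t
      = G1 s 1 - G1 s ε + (1/2) * (∫ t in ε..1, h1f s t) - (1/2) * (∫ t in ε..1, k s t) := by
  have hfi : IntervalIntegrable (f s) volume ε 1 := intervalIntegrable_f hs0 hε one_pos
  have hh1i : IntervalIntegrable (h1f s) volume ε 1 := by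
    apply ContinuousOn.intervalIntegrable
    apply contOn_h1f.mono
    intro x hx
    rw [uIcc_of_le (by linarith)] at hx
    exact lt_of_lt_of_le hε hx.1
  have hki : IntervalIntegrable (k s) volume ε 1 :=
    intervalIntegrable_k_to_one hs0 hs1 hε (by linarith)
  have hFi : IntervalIntegrable (fun x => f s x - (1/2)*(h1f s x) + (1/2)*(k s x)) volume ε 1 :=
    (hfi.sub (hh1i.const_mul _)).add (hki.const_mul _)
  have hcont : ContinuousOn (G1 s) (Icc ε 1) := by
    apply (contOn_G1 hs0).mono
    intro x hx
    exact lt_of_lt_of_le hε hx.1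
  have hFTC := intervalIntegral.integral_eq_sub_of_hasDeriv_right_of_le (by linarith : ε ≤ 1)
    hcont (fun x hx => (hasDerivAt_G1 hs0 (lt_trans hε hx.1) hx.2).hasDerivWithinAt) hFi
  rw [intervalIntegral.integral_add (hfi.sub (hh1i.const_mul _)) (hki.const_mul _),
    intervalIntegral.integral_sub hfi (hh1i.const_mul _),
    intervalIntegral.integral_const_mul, intervalIntegral.integral_const_mul] at hFTC
  linarith

lemma ftc2 (hs0 : 0 < s) {M : ℝ} (hM : 2 ≤ M) :
    ∫ t in (1:ℝ)..M, f s t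
      = G2 s M - G2 s 1 + (1/2) * (∫ t in (1:ℝ)..M, h1f s t) := by
  have hfi : IntervalIntegrable (f s) volume 1 M := intervalIntegrable_f hs0 one_pos (by linarith)
  have hh1i : IntervalIntegrable (h1f s) volume 1 M := by
    apply ContinuousOn.intervalIntegrable
    apply contOn_h1f.mono
    intro x hx
    rw [uIcc_of_le (by linarith)] at hx
    exact lt_of_lt_of_le one_pos hx.1
  have hFi : IntervalIntegrable (fun x => f s x - (1/2)*(h1f s x)) volume 1 M :=
    hfi.sub (hh1i.const_mul _)
  have hcont : ContinuousOn (G2 s) (Icc 1 M) := by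
    apply (contOn_G2 hs0).mono
    intro x hx
    exact lt_of_lt_of_le one_pos hx.1
  have hFTC := intervalIntegral.integral_eq_sub_of_hasDeriv_right_of_le (by linarith : (1:ℝ) ≤ M)
    hcont (fun x hx => (hasDerivAt_G2 hs0 hx.1).hasDerivWithinAt) hFi
  rw [intervalIntegral.integral_sub hfi (hh1i.const_mul _),
    intervalIntegral.integral_const_mul] at hFTC
  linarith








lemma abs_N_le_sq (hs0 : 0 < s) (hs1 : s < 1) {t : ℝ} (ht : |t| ≤ 1/2) :
    |N s t| ≤ 4 * t^2 := by
  obtain ⟨h1, h2⟩ := abs_le.mp ht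
  rw [N_eq' (by linarith) (by linarith)]
  rw [abs_le]
  constructor
  · have := quad_bound hs0 hs1 ht
    linarith
  · have := N_nonpos hs0 hs1 (le_trans ht (by norm_num))
    rw [N_eq' (by linarith) (by linarith)] at this
    nlinarith [sq_nonneg t]

lemma abs_N_le_big (hs0 : 0 < s) (hs1 : s < 1) {t : ℝ} (ht : 1/2 ≤ t) :
    |N s t| ≤ 3 * t ^ s + 3 := by
  have h0t : (0:ℝ) < t := by linarith
  have ha : (0:ℝ) ≤ max (1+t) 0 ^ s := Real.rpow_nonneg (le_max_right _ _) s
  have hb : (0:ℝ) ≤ max (1-t) 0 ^ s := Real.rpow_nonneg (le_max_right _ _) s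
  have ha' : max (1+t) 0 ^ s ≤ 3 * t ^ s := by
    rw [max_eq_left (by linarith : (0:ℝ) ≤ 1+t)]
    calc (1+t) ^ s ≤ (3*t) ^ s := Real.rpow_le_rpow (by linarith) (by linarith) hs0.le
      _ = 3 ^ s * t ^ s := Real.mul_rpow (by norm_num) h0t.le
      _ ≤ 3 * t ^ s := by
          have h3 : (3:ℝ) ^ s ≤ 3 ^ (1:ℝ) :=
            Real.rpow_le_rpow_of_exponent_le (by norm_num) hs1.le
          rw [Real.rpow_one] at h3
          have := Real.rpow_nonneg h0t.le s
          nlinarith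
  have hb' : max (1-t) 0 ^ s ≤ 1 := by
    apply Real.rpow_le_one (le_max_right _ _) _ hs0.le
    rw [max_le_iff]; constructor <;> linarith
  rw [abs_le]
  simp only [N]
  constructor
  · nlinarith [Real.rpow_nonneg h0t.le s]
  · nlinarith [Real.rpow_nonneg h0t.le s]

lemma abs_f_le_small (hs0 : 0 < s) (hs1 : s < 1) {t : ℝ} (h0 : 0 < t) (ht : t ≤ 1/2) :
    |f s t| ≤ 4 * t ^ (1 - 2*s) := by
  have habs : |t| = t := abs_of_pos h0
  have hden : (0:ℝ) < t ^ (1+2*s) := Real.rpow_pos_of_pos h0 _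
  rw [f, habs, abs_div, abs_of_pos hden, div_le_iff₀ hden]
  have hNb : |N s t| ≤ 4 * t^2 := abs_N_le_sq hs0 hs1 (by rw [habs]; exact ht)
  calc |N s t| ≤ 4 * t^2 := hNb
    _ = 4 * t ^ (1-2*s) * t ^ (1+2*s) := by
        rw [mul_assoc, ← Real.rpow_add h0, show (1:ℝ)-2*s+(1+2*s) = 2 by ring,
          show (2:ℝ) = ((2:ℕ):ℝ) by norm_num, Real.rpow_natCast]

lemma abs_f_le_big (hs0 : 0 < s) (hs1 : s < 1) {t : ℝ} (ht : 1/2 ≤ t) :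
    |f s t| ≤ 3 * t ^ (-1-s) + 3 * t ^ (-1-2*s) := by
  have h0 : (0:ℝ) < t := by linarith
  have habs : |t| = t := abs_of_pos h0
  have hden : (0:ℝ) < t ^ (1+2*s) := Real.rpow_pos_of_pos h0 _
  rw [f, habs, abs_div, abs_of_pos hden, div_le_iff₀ hden]
  have expand : (3 * t ^ (-1-s) + 3 * t ^ (-1-2*s)) * t ^ (1+2*s) = 3 * t ^ s + 3 := by
    rw [add_mul, mul_assoc, mul_assoc, ← Real.rpow_add h0, ← Real.rpow_add h0,
      show -1-s+(1+2*s) = s by ring, show -1-2*s+(1+2*s) = (0:ℝ) by ring,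
      Real.rpow_zero, mul_one]
  rw [expand]
  exact abs_N_le_big hs0 hs1 ht

lemma integrableOn_f_Ioi (hs0 : 0 < s) (hs1 : s < 1) : IntegrableOn (f s) (Ioi (0:ℝ)) := by
  have hmeas := (measurable_f hs0).aestronglyMeasurable (μ := volume)
  have h1 : IntegrableOn (f s) (Ioc (0:ℝ) (1/2)) := by
    have hint : IntegrableOn (fun t : ℝ => 4 * t ^ (1-2*s)) (Ioc (0:ℝ) (1/2)) := by
      have := (intervalIntegral.intervalIntegrable_rpow' (a := 0) (b := 1/2)
        (r := 1-2*s) (by linarith)).const_mul 4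
      rwa [intervalIntegrable_iff_integrableOn_Ioc_of_le (by norm_num)] at this
    refine Integrable.mono hint (hmeas.restrict) ?_
    filter_upwards [ae_restrict_mem measurableSet_Ioc] with t ht
    have hb := abs_f_le_small hs0 hs1 ht.1 ht.2
    have : (0:ℝ) ≤ 4 * t ^ (1-2*s) := mul_nonneg (by norm_num) (Real.rpow_nonneg ht.1.le _)
    rw [Real.norm_eq_abs, Real.norm_eq_abs, abs_of_nonneg this]
    exact hb
  have h2 : IntegrableOn (f s) (Ioi (1/2:ℝ)) := by
    have hint : IntegrableOn (fun t : ℝ => 3 * t ^ (-1-s) + 3 * t ^ (-1-2*s)) (Ioi (1/2:ℝ)) := by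
      refine Integrable.add ?_ ?_
      · exact (integrableOn_Ioi_rpow_of_lt (by linarith) (by norm_num)).const_mul 3
      · exact (integrableOn_Ioi_rpow_of_lt (by linarith) (by norm_num)).const_mul 3
    refine Integrable.mono hint (hmeas.restrict) ?_
    filter_upwards [ae_restrict_mem measurableSet_Ioi] with t ht
    have hb := abs_f_le_big hs0 hs1 (le_of_lt ht)
    have h0 : (0:ℝ) < t := by have := ht; simp only [mem_Ioi] at this; linarith
    have hnn : (0:ℝ) ≤ 3 * t ^ (-1-s) + 3 * t ^ (-1-2*s) := by positivity
    rw [Real.norm_eq_abs, Real.norm_eq_abs, abs_of_nonneg hnn]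
    exact hb
  have : Ioi (0:ℝ) = Ioc (0:ℝ) (1/2) ∪ Ioi (1/2:ℝ) := by
    rw [Ioc_union_Ioi_eq_Ioi]; norm_num
  rw [this]
  exact h1.union h2

lemma f_even (t : ℝ) : f s (-t) = f s t := by
  simp only [f, N, abs_neg]
  ring_nf

lemma integral_f_eq_twice (hs0 : 0 < s) (hs1 : s < 1) :
    ∫ t : ℝ, f s t = 2 * ∫ t in Ioi (0:ℝ), f s t := by
  have hIoi := integrableOn_f_Ioi hs0 hs1
  have hIic : IntegrableOn (f s) (Iic (0:ℝ)) := by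
    have m : MeasurableEmbedding (Neg.neg : ℝ → ℝ) := (Homeomorph.neg ℝ).measurableEmbedding
    rw [← Measure.map_neg_eq_self (volume : Measure ℝ)]
    rw [m.integrableOn_map_iff]
    simp_rw [Function.comp_def, neg_preimage, neg_Iic, neg_zero]
    have : IntegrableOn (fun x : ℝ => f s (-x)) (Ici (0:ℝ)) := by
      rw [integrableOn_Ici_iff_integrableOn_Ioi]
      exact hIoi.congr_fun (fun t _ => (f_even t).symm) measurableSet_Ioi
    exact this
  rw [← integral_Iic_add_Ioi (b := (0:ℝ)) hIic hIoi]
  have heq : ∫ t in Iic (0:ℝ), f s t = ∫ t in Ioi (0:ℝ), f s t := by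
    have h1 : ∫ t in Iic (0:ℝ), f s t = ∫ t in Iic (0:ℝ), f s (-t) :=
      setIntegral_congr_fun measurableSet_Iic (fun t _ => (f_even t).symm)
    rw [h1, integral_comp_neg_Iic, neg_zero]
  rw [heq]; ring







lemma cov (hs0 : 0 < s) {a b : ℝ} (ha : 0 < a) (hab : a ≤ b) :
    ∫ t in a..b, h1f s t = ∫ u in a/(1+a)..b/(1+b), k s u := by
  set σ : ℝ → ℝ := fun t => t / (1+t) with hσ
  set σ' : ℝ → ℝ := fun t => ((1+t)^2)⁻¹ with hσ'
  have hmem : ∀ x ∈ uIcc a b, 0 < x := by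
    intro x hx
    rw [uIcc_of_le hab] at hx
    exact lt_of_lt_of_le ha hx.1
  have hd : ∀ x ∈ uIcc a b, HasDerivAt σ (σ' x) x := by
    intro x hx
    have hx0 := hmem x hx
    have h1x : (0:ℝ) < 1 + x := by linarith
    have := (hasDerivAt_id x).div ((hasDerivAt_id x).const_add 1) h1x.ne'
    refine this.congr_deriv ?_
    simp only [hσ', id_eq]
    field_simp
    ring
  have hc' : ContinuousOn σ' (uIcc a b) := by
    apply ContinuousOn.inv₀
    · exact ((continuous_const.add continuous_id').pow 2).continuousOn
    · intro x hx
      have hx0 := hmem x hx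
      positivity
  have himg : σ '' (uIcc a b) ⊆ Ioo (0:ℝ) 1 := by
    rintro u ⟨x, hx, rfl⟩
    have hx0 := hmem x hx
    have h1x : (0:ℝ) < 1 + x := by linarith
    constructor
    · exact div_pos hx0 h1x
    · rw [div_lt_one h1x]; linarith
  have hck : ContinuousOn (k s) (σ '' (uIcc a b)) := contOn_k.mono himg
  have key := intervalIntegral.integral_comp_smul_deriv' hd hc' hck
  have hcongr : ∀ x ∈ uIcc a b, h1f s x = σ' x • (k s ∘ σ) x := by
    intro x hx
    have hx0 := hmem x hx
    have h1x : (0:ℝ) < 1 + x := by linarith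
    have r1 : 1 - σ x = (1+x)⁻¹ := by
      rw [hσ]
      field_simp
      ring
    have r2 : ((1+x)⁻¹) ^ (s-1) = (1+x) ^ (-(s-1)) := by
      rw [Real.inv_rpow h1x.le, ← Real.rpow_neg h1x.le]
    have r3 : (σ x) ^ (-(2*s)) = x ^ (-(2*s)) * (1+x) ^ (2*s) := by
      rw [hσ]
      rw [Real.div_rpow hx0.le h1x.le, Real.rpow_neg h1x.le (2*s)]
      rw [div_eq_mul_inv, inv_inv]
    have r4 : σ' x = (1+x) ^ (-(2:ℝ)) := by
      simp only [hσ']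
      rw [← Real.rpow_natCast (1+x) 2, ← Real.rpow_neg h1x.le]
      norm_num
    simp only [Function.comp_apply, k, smul_eq_mul]
    rw [r1, r2, r3, r4, h1f]
    rw [show ((1+x) ^ (-(2:ℝ)) * ((1+x) ^ (-(s-1)) * (x ^ (-(2*s)) * (1+x) ^ (2*s))))
      = ((1+x) ^ (-(2:ℝ)) * (1+x) ^ (-(s-1)) * (1+x) ^ (2*s)) * x ^ (-(2*s)) by ring]
    rw [← Real.rpow_add h1x, ← Real.rpow_add h1x,
      show (-(2:ℝ)) + -(s-1) + 2*s = s-1 by ring]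
  rw [intervalIntegral.integral_congr hcongr]
  rw [key]







lemma intervalIntegrable_h1f {a b : ℝ} (ha : 0 < a) (hb : 0 < b) :
    IntervalIntegrable (h1f s) volume a b := by
  apply ContinuousOn.intervalIntegrable
  apply contOn_h1f.mono
  intro x hx
  rcases le_total a b with h | h
  · rw [uIcc_of_le h] at hx; exact lt_of_lt_of_le ha hx.1
  · rw [uIcc_of_ge h] at hx; exact lt_of_lt_of_le hb hx.1

lemma intervalIntegrable_k_mid {a b : ℝ} (ha : 0 < a) (ha1 : a < 1) (hb : 0 < b) (hb1 : b < 1) :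
    IntervalIntegrable (k s) volume a b := by
  apply ContinuousOn.intervalIntegrable
  apply contOn_k.mono
  intro x hx
  rcases le_total a b with h | h
  · rw [uIcc_of_le h] at hx; exact ⟨lt_of_lt_of_le ha hx.1, lt_of_le_of_lt hx.2 hb1⟩
  · rw [uIcc_of_ge h] at hx; exact ⟨lt_of_lt_of_le hb hx.1, lt_of_le_of_lt hx.2 ha1⟩

lemma master (hs0 : 0 < s) (hs1 : s < 1) {ε M : ℝ} (hε : 0 < ε) (hε2 : ε ≤ 1/2) (hM : 2 ≤ M) :
    ∫ t in ε..M, f s t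
      = - G1 s ε + G2 s M + (1/2) * (∫ u in ε/(1+ε)..ε, k s u)
        - (1/2) * (∫ u in M/(1+M)..1, k s u) := by
  have h1M : (0:ℝ) < 1 + M := by linarith
  have h1ε : (0:ℝ) < 1 + ε := by linarith
  set c := ε/(1+ε) with hc
  set d := M/(1+M) with hd
  have hc0 : 0 < c := div_pos hε h1ε
  have hcε : c < ε := by
    rw [hc, div_lt_iff₀ h1ε]
    nlinarith
  have hd23 : (2:ℝ)/3 ≤ d := by
    rw [hd, le_div_iff₀ h1M]
    linarith
  have hd1 : d < 1 := by
    rw [hd, div_lt_one h1M]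
    linarith
  have hεd : ε ≤ d := by linarith
  -- split f
  have hsplit : (∫ t in ε..1, f s t) + (∫ t in (1:ℝ)..M, f s t) = ∫ t in ε..M, f s t :=
    intervalIntegral.integral_add_adjacent_intervals
      (intervalIntegrable_f hs0 hε one_pos) (intervalIntegrable_f hs0 one_pos (by linarith))
  -- h1f additivity
  have hh1add : (∫ t in ε..1, h1f s t) + (∫ t in (1:ℝ)..M, h1f s t) = ∫ t in ε..M, h1f s t :=
    intervalIntegral.integral_add_adjacent_intervals
      (intervalIntegrable_h1f hε one_pos) (intervalIntegrable_h1f one_pos (by linarith))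
  -- COV
  have hcov : ∫ t in ε..M, h1f s t = ∫ u in c..d, k s u := cov hs0 hε (by linarith)
  -- k splits
  have hk1 : (∫ u in c..ε, k s u) + (∫ u in ε..d, k s u) = ∫ u in c..d, k s u :=
    intervalIntegral.integral_add_adjacent_intervals
      (intervalIntegrable_k_mid hc0 (by linarith) hε (by linarith))
      (intervalIntegrable_k_mid hε (by linarith) (by linarith : (0:ℝ) < d) hd1)
  have hk2 : (∫ u in ε..d, k s u) + (∫ u in d..1, k s u) = ∫ u in ε..1, k s u :=
    intervalIntegral.integral_add_adjacent_intervals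
      (intervalIntegrable_k_mid hε (by linarith) (by linarith : (0:ℝ) < d) hd1)
      (intervalIntegrable_k_to_one hs0 hs1 (by linarith : (0:ℝ) < d) hd1.le)
  have hG : G1 s 1 = G2 s 1 := by
    rw [G1, G2, show (1:ℝ) - 1 = 0 by ring, Real.zero_rpow hs0.ne']
    ring_nf
  have e1 := ftc1 hs0 hs1 hε hε2
  have e2 := ftc2 hs0 hM
  linarith

lemma bound_G1 (hs0 : 0 < s) (hs1 : s < 1) {ε : ℝ} (hε : 0 < ε) (hε2 : ε ≤ 1/2) :
    |G1 s ε| ≤ (2/s) * ε ^ (2-2*s) := by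
  have hP : (0:ℝ) < ε ^ (-(2*s)) := Real.rpow_pos_of_pos hε _
  have hN : |(1+ε) ^ s + (1-ε) ^ s - 2| ≤ 4 * ε^2 := by
    have := abs_N_le_sq hs0 hs1 (t := ε) (by rw [abs_of_pos hε]; exact hε2)
    rwa [N_eq' (by linarith) (by linarith)] at this
  rw [G1, abs_neg, abs_div, abs_of_pos (by linarith : (0:ℝ) < 2*s), abs_mul,
    abs_of_pos hP, div_le_iff₀ (by linarith : (0:ℝ) < 2*s)]
  have key : (2/s) * ε ^ (2-2*s) * (2*s) = 4 * ε^2 * ε ^ (-(2*s)) := by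
    rw [show (4:ℝ) * ε^2 * ε ^ (-(2*s)) = 4 * (ε^(2:ℕ) * ε ^ (-(2*s))) by ring,
      ← Real.rpow_natCast ε 2, ← Real.rpow_add hε,
      show ((2:ℕ):ℝ) + (-(2*s)) = 2-2*s by push_cast; ring]
    field_simp
    ring
  rw [key]
  apply mul_le_mul_of_nonneg_right hN hP.le

lemma bound_G2 (hs0 : 0 < s) (hs1 : s < 1) {M : ℝ} (hM : 2 ≤ M) :
    |G2 s M| ≤ (2/s) * M ^ (-s) := by
  have hM0 : (0:ℝ) < M := by linarith
  have hP : (0:ℝ) < M ^ (-(2*s)) := Real.rpow_pos_of_pos hM0 _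
  have hMs1 : (1:ℝ) ≤ M ^ s := Real.one_le_rpow (by linarith) hs0.le
  have hN : |(1+M) ^ s - 2| ≤ 4 * M ^ s := by
    have hup : (1+M) ^ s ≤ 2 * M ^ s := by
      calc (1+M) ^ s ≤ (2*M) ^ s := Real.rpow_le_rpow (by linarith) (by linarith) hs0.le
        _ = 2 ^ s * M ^ s := Real.mul_rpow (by norm_num) hM0.le
        _ ≤ 2 * M ^ s := by
            have h2 : (2:ℝ) ^ s ≤ 2 ^ (1:ℝ) :=
              Real.rpow_le_rpow_of_exponent_le (by norm_num) hs1.le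
            rw [Real.rpow_one] at h2
            nlinarith [Real.rpow_nonneg hM0.le s]
    have hlow : (0:ℝ) ≤ (1+M) ^ s := Real.rpow_nonneg (by linarith) s
    rw [abs_le]
    constructor <;> nlinarith
  rw [G2, abs_neg, abs_div, abs_of_pos (by linarith : (0:ℝ) < 2*s), abs_mul,
    abs_of_pos hP, div_le_iff₀ (by linarith : (0:ℝ) < 2*s)]
  have key : (2/s) * M ^ (-s) * (2*s) = 4 * M ^ s * M ^ (-(2*s)) := by
    rw [show (4:ℝ) * M ^ s * M ^ (-(2*s)) = 4 * (M ^ s * M ^ (-(2*s))) by ring,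
      ← Real.rpow_add hM0, show s + (-(2*s)) = -s by ring]
    field_simp
    ring
  rw [key]
  apply mul_le_mul_of_nonneg_right hN hP.le

lemma bound_near (hs0 : 0 < s) (hs1 : s < 1) {ε : ℝ} (hε : 0 < ε) (hε2 : ε ≤ 1/2) :
    |∫ u in ε/(1+ε)..ε, k s u| ≤ 8 * ε ^ (2-2*s) := by
  have h1ε : (0:ℝ) < 1 + ε := by linarith
  set c := ε/(1+ε) with hc
  have hc0 : 0 < c := div_pos hε h1ε
  have hcε : c < ε := by
    rw [hc, div_lt_iff₀ h1ε]; nlinarith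
  have hchalf : ε/2 ≤ c := by
    rw [hc, div_le_div_iff₀ (by norm_num) h1ε]; nlinarith
  have hCb : ∀ x ∈ Set.uIoc c ε, ‖k s x‖ ≤ 8 * ε ^ (-(2*s)) := by
    intro x hx
    rw [Set.uIoc_of_le hcε.le] at hx
    obtain ⟨hx1, hx2⟩ := hx
    have hx0 : 0 < x := lt_trans hc0 hx1
    have hx12 : x ≤ 1/2 := le_trans hx2 hε2
    have hb1 : (1-x) ^ (s-1) ≤ 2 := by
      calc (1-x) ^ (s-1) ≤ (1/2:ℝ) ^ (s-1) :=
            Real.rpow_le_rpow_of_nonpos (by norm_num) (by linarith) (by linarith)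
        _ ≤ 2 := by
            rw [show (1/2:ℝ) = 2⁻¹ by norm_num, Real.inv_rpow (by norm_num : (0:ℝ) ≤ 2),
              ← Real.rpow_neg (by norm_num : (0:ℝ) ≤ 2)]
            calc (2:ℝ) ^ (-(s-1)) ≤ 2 ^ (1:ℝ) :=
                  Real.rpow_le_rpow_of_exponent_le (by norm_num) (by linarith)
              _ = 2 := Real.rpow_one 2
    have hb2 : x ^ (-(2*s)) ≤ 4 * ε ^ (-(2*s)) := by
      calc x ^ (-(2*s)) ≤ (ε/2) ^ (-(2*s)) := by
            apply Real.rpow_le_rpow_of_nonpos (by linarith) (by linarith) (by nlinarith)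
        _ = ε ^ (-(2*s)) * (2:ℝ) ^ (2*s) := by
            rw [Real.div_rpow hε.le (by norm_num : (0:ℝ) ≤ 2), Real.rpow_neg (by norm_num : (0:ℝ) ≤ 2) (2*s)]
            rw [div_eq_mul_inv, inv_inv]
        _ ≤ 4 * ε ^ (-(2*s)) := by
            have h4 : (2:ℝ) ^ (2*s) ≤ 2 ^ (2:ℝ) :=
              Real.rpow_le_rpow_of_exponent_le (by norm_num) (by linarith)
            have h4' : (2:ℝ) ^ (2:ℝ) = 4 := by
              rw [show (2:ℝ) = ((2:ℕ):ℝ) from by norm_num, Real.rpow_natCast]; norm_num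
            nlinarith [Real.rpow_nonneg hε.le (-(2*s)), Real.rpow_nonneg (by norm_num : (0:ℝ) ≤ 2) (2*s)]
    have hk0 : 0 ≤ k s x := mul_nonneg (Real.rpow_nonneg (by linarith) _) (Real.rpow_nonneg hx0.le _)
    rw [Real.norm_eq_abs, abs_of_nonneg hk0, k]
    calc (1-x) ^ (s-1) * x ^ (-(2*s)) ≤ 2 * (4 * ε ^ (-(2*s))) := by
          apply mul_le_mul hb1 hb2 (Real.rpow_nonneg hx0.le _) (by norm_num)
      _ = 8 * ε ^ (-(2*s)) := by ring
  have hnorm := intervalIntegral.norm_integral_le_of_norm_le_const hCb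
  rw [Real.norm_eq_abs] at hnorm
  calc |∫ u in c..ε, k s u| ≤ 8 * ε ^ (-(2*s)) * |ε - c| := hnorm
    _ ≤ 8 * ε ^ (-(2*s)) * ε^2 := by
        apply mul_le_mul_of_nonneg_left _ (by positivity)
        rw [abs_of_pos (by linarith : (0:ℝ) < ε - c), hc]
        have heq : ε - ε/(1+ε) = ε^2/(1+ε) := by field_simp; ring
        rw [heq, div_le_iff₀ h1ε]
        nlinarith
    _ = 8 * ε ^ (2-2*s) := by
        rw [mul_assoc, ← Real.rpow_natCast ε 2, ← Real.rpow_add hε,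
          show -(2*s) + ((2:ℕ):ℝ) = 2-2*s by push_cast; ring]

lemma bound_tail (hs0 : 0 < s) (hs1 : s < 1) {M : ℝ} (hM : 2 ≤ M) :
    |∫ u in M/(1+M)..1, k s u| ≤ (4/s) * M ^ (-s) := by
  have hM0 : (0:ℝ) < M := by linarith
  have h1M : (0:ℝ) < 1 + M := by linarith
  set d := M/(1+M) with hd
  have hd23 : (2:ℝ)/3 ≤ d := by rw [hd, le_div_iff₀ h1M]; linarith
  have hd1 : d < 1 := by rw [hd, div_lt_one h1M]; linarith
  have hd0 : (0:ℝ) < d := by linarith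
  have hki : IntervalIntegrable (k s) volume d 1 := intervalIntegrable_k_to_one hs0 hs1 hd0 hd1.le
  have hgi : IntervalIntegrable (fun u : ℝ => 4 * (1-u) ^ (s-1)) volume d 1 := by
    have := intervalIntegral.intervalIntegrable_rpow' (a := 0) (b := 1-d) (r := s-1)
      (by linarith)
    have h := (this.comp_sub_left 1).symm
    simp only [sub_sub_cancel, sub_zero] at h
    exact h.const_mul 4
  have hmono : ∀ u ∈ Icc d 1, k s u ≤ 4 * (1-u) ^ (s-1) := by
    intro u hu
    have hu0 : 0 < u := lt_of_lt_of_le hd0 hu.1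
    have hb : u ^ (-(2*s)) ≤ 4 := by
      calc u ^ (-(2*s)) ≤ (1/2:ℝ) ^ (-(2*s)) :=
            Real.rpow_le_rpow_of_nonpos (by norm_num) (by linarith [hu.1]) (by nlinarith)
        _ = (2:ℝ) ^ (2*s) := by
            rw [show (1/2:ℝ) = 2⁻¹ by norm_num, Real.inv_rpow (by norm_num : (0:ℝ) ≤ 2),
              ← Real.rpow_neg (by norm_num : (0:ℝ) ≤ 2), neg_neg]
        _ ≤ 4 := by
            have h4 : (2:ℝ) ^ (2*s) ≤ 2 ^ (2:ℝ) :=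
              Real.rpow_le_rpow_of_exponent_le (by norm_num) (by linarith)
            have h4' : (2:ℝ) ^ (2:ℝ) = 4 := by
              rw [show (2:ℝ) = ((2:ℕ):ℝ) from by norm_num, Real.rpow_natCast]; norm_num
            linarith
    rw [k, mul_comm]
    apply mul_le_mul hb le_rfl (Real.rpow_nonneg (by linarith [hu.2]) _)
      (by norm_num)
  have hle := intervalIntegral.integral_mono_on hd1.le hki hgi hmono
  have hnn : 0 ≤ ∫ u in d..1, k s u := by
    apply intervalIntegral.integral_nonneg hd1.le
    intro u hu
    exact mul_nonneg (Real.rpow_nonneg (by linarith [hu.2]) _)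
      (Real.rpow_nonneg (by linarith [lt_of_lt_of_le hd0 hu.1]) _)
  have hcomp : (∫ u in d..1, 4 * (1-u) ^ (s-1)) = 4 * ((1-d) ^ s / s) := by
    rw [intervalIntegral.integral_const_mul]
    congr 1
    have hsub : (∫ u in d..1, (1-u) ^ (s-1)) = ∫ x in (1-1:ℝ)..(1-d), x ^ (s-1) := by
      rw [← intervalIntegral.integral_comp_sub_left (fun x : ℝ => x ^ (s-1)) 1]
    have hne : s - 1 + 1 ≠ 0 := by intro h; nlinarith
    rw [hsub, show (1:ℝ)-1 = 0 by ring, integral_rpow (Or.inl (by linarith : (-1:ℝ) < s-1)),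
      Real.zero_rpow hne, show s-1+1 = s by ring]
    ring
  have hfin : (1-d) ^ s ≤ M ^ (-s) := by
    have h1d : 1 - d = (1+M)⁻¹ := by
      rw [hd]
      field_simp
      ring
    rw [h1d, Real.inv_rpow h1M.le, ← Real.rpow_neg h1M.le]
    exact Real.rpow_le_rpow_of_nonpos hM0 (by linarith) (by linarith)
  rw [abs_of_nonneg hnn]
  calc (∫ u in d..1, k s u) ≤ 4 * ((1-d) ^ s / s) := by rw [← hcomp]; exact hle
    _ = (4/s) * (1-d) ^ s := by field_simp
    _ ≤ (4/s) * M ^ (-s) := by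
        apply mul_le_mul_of_nonneg_left hfin
        positivity

lemma total_bound (hs0 : 0 < s) (hs1 : s < 1) {ε M : ℝ} (hε : 0 < ε) (hε2 : ε ≤ 1/2)
    (hM : 2 ≤ M) : |∫ t in ε..M, f s t| ≤ (2/s + 4) * ε ^ (2-2*s) + (4/s) * M ^ (-s) := by
  rw [master hs0 hs1 hε hε2 hM]
  have b1 := bound_G1 hs0 hs1 hε hε2
  have b2 := bound_G2 hs0 hs1 hM
  have b3 := bound_near hs0 hs1 hε hε2
  have b4 := bound_tail hs0 hs1 hM
  set X := ∫ u in ε/(1+ε)..ε, k s u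
  set Y := ∫ u in M/(1+M)..1, k s u
  calc |(-G1 s ε + G2 s M + (1/2) * X) - (1/2) * Y|
      ≤ |(-G1 s ε + G2 s M + (1/2) * X)| + |(1/2) * Y| := abs_sub _ _
    _ ≤ (|(-G1 s ε)| + |G2 s M| + |(1/2) * X|) + |(1/2) * Y| := by
        refine add_le_add ?_ le_rfl
        exact (abs_add_le _ _).trans (add_le_add (abs_add_le _ _) le_rfl)
    _ = |G1 s ε| + |G2 s M| + (1/2) * |X| + (1/2) * |Y| := by
        rw [abs_neg, abs_mul, abs_mul, abs_of_pos (by norm_num : (0:ℝ) < 1/2)]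
    _ ≤ (2/s) * ε ^ (2-2*s) + (2/s) * M ^ (-s) + (1/2) * (8 * ε ^ (2-2*s))
        + (1/2) * ((4/s) * M ^ (-s)) := by
        apply add_le_add (add_le_add (add_le_add b1 b2)
          (mul_le_mul_of_nonneg_left b3 (by norm_num)))
          (mul_le_mul_of_nonneg_left b4 (by norm_num))
    _ = (2/s + 4) * ε ^ (2-2*s) + (4/s) * M ^ (-s) := by ring







lemma tendsto_seq_zero (hs0 : 0 < s) (hs1 : s < 1) :
    Tendsto (fun n : ℕ => ∫ t in ((n:ℝ)⁻¹)..(n:ℝ), f s t) atTop (𝓝 0) := by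
  have hb : Tendsto (fun n : ℕ =>
      (2/s + 4) * ((n:ℝ)⁻¹) ^ (2-2*s) + (4/s) * (n:ℝ) ^ (-s)) atTop (𝓝 0) := by
    have h1 : Tendsto (fun n : ℕ => ((n:ℝ)⁻¹) ^ (2-2*s)) atTop (𝓝 0) := by
      have heq : ∀ n : ℕ, ((n:ℝ)⁻¹) ^ (2-2*s) = (n:ℝ) ^ (-(2-2*s)) := by
        intro n
        rw [Real.inv_rpow (Nat.cast_nonneg n), ← Real.rpow_neg (Nat.cast_nonneg n)]
      simp_rw [heq]
      exact (tendsto_rpow_neg_atTop (by linarith)).comp tendsto_natCast_atTop_atTop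
    have h2 : Tendsto (fun n : ℕ => (n:ℝ) ^ (-s)) atTop (𝓝 0) :=
      (tendsto_rpow_neg_atTop hs0).comp tendsto_natCast_atTop_atTop
    have := (h1.const_mul (2/s + 4)).add (h2.const_mul (4/s))
    simpa using this
  apply squeeze_zero_norm' _ hb
  filter_upwards [eventually_ge_atTop 2] with n hn
  have hn2 : (2:ℝ) ≤ (n:ℝ) := by exact_mod_cast hn
  have hpos : 0 < ((n:ℝ))⁻¹ := by positivity
  have hle : ((n:ℝ))⁻¹ ≤ 1/2 := by
    rw [inv_le_comm₀ (by linarith) (by norm_num)]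
    linarith
  rw [Real.norm_eq_abs]
  exact total_bound hs0 hs1 hpos hle hn2

lemma tendsto_seq_integral (hs0 : 0 < s) (hs1 : s < 1) :
    Tendsto (fun n : ℕ => ∫ t in ((n:ℝ)⁻¹)..(n:ℝ), f s t) atTop
      (𝓝 (∫ t in Ioi (0:ℝ), f s t)) := by
  have hfi := integrableOn_f_Ioi hs0 hs1
  set S : ℕ → Set ℝ := fun n => Ioc ((n:ℝ)⁻¹) (n:ℝ) with hS
  have hsm : ∀ n, MeasurableSet (S n) := fun n => measurableSet_Ioc
  have hmono : Monotone S := by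
    intro m n hmn
    rcases Nat.eq_zero_or_pos m with hm0 | hm1
    · subst hm0
      simp [hS]
    · have hm1' : (1:ℝ) ≤ (m:ℝ) := by exact_mod_cast hm1
      have hmn' : (m:ℝ) ≤ (n:ℝ) := by exact_mod_cast hmn
      apply Ioc_subset_Ioc _ hmn'
      exact inv_anti₀ (by linarith) hmn'
  have hunion : (⋃ n, S n) = Ioi (0:ℝ) := by
    ext x
    simp only [mem_iUnion, hS, mem_Ioc, mem_Ioi]
    constructor
    · rintro ⟨n, h1, h2⟩
      exact lt_of_le_of_lt (by positivity) h1
    · intro hx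
      obtain ⟨n, hn⟩ := exists_nat_gt (max x x⁻¹)
      have hx1 : x ≤ (n:ℝ) := le_of_lt (lt_of_le_of_lt (le_max_left _ _) hn)
      have hx2 : x⁻¹ < (n:ℝ) := lt_of_le_of_lt (le_max_right _ _) hn
      refine ⟨n, ?_, hx1⟩
      have h0 : 0 < x⁻¹ := inv_pos.mpr hx
      have := inv_strictAnti₀ h0 hx2
      rwa [inv_inv] at this
  have hlim := tendsto_setIntegral_of_monotone hsm hmono (by rw [hunion]; exact hfi)
  rw [hunion] at hlim
  apply hlim.congr'
  filter_upwards [eventually_ge_atTop 1] with n hn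
  have hn1 : (1:ℝ) ≤ (n:ℝ) := by exact_mod_cast hn
  have : ((n:ℝ))⁻¹ ≤ (n:ℝ) := by
    calc ((n:ℝ))⁻¹ ≤ 1 := inv_le_one_of_one_le₀ hn1
      _ ≤ (n:ℝ) := hn1
  rw [intervalIntegral.integral_of_le this]

lemma integral_Ioi_zero (hs0 : 0 < s) (hs1 : s < 1) : ∫ t in Ioi (0:ℝ), f s t = 0 :=
  tendsto_nhds_unique (tendsto_seq_integral hs0 hs1) (tendsto_seq_zero hs0 hs1)


end Stmt1Aux

open Stmt1Aux in
theorem stmt_1 (s : ℝ) (hs0 : 0 < s) (hs1 : s < 1) :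
    ∫ t : ℝ,
      (max (1 + t) 0 ^ s + max (1 - t) 0 ^ s - 2 * max (1 : ℝ) 0 ^ s) / |t| ^ (1 + 2 * s) = 0 := by
  have heq : ∀ t : ℝ,
      (max (1 + t) 0 ^ s + max (1 - t) 0 ^ s - 2 * max (1 : ℝ) 0 ^ s) / |t| ^ (1 + 2 * s)
        = f s t := by
    intro t
    rw [f, N]
    norm_num
  simp_rw [heq]
  rw [integral_f_eq_twice hs0 hs1, integral_Ioi_zero hs0 hs1]
  ring
end

section
/- For every n ≥ 1 and s ∈ (0,1), the integral ∫_{ℝⁿ} (1 − cos(ω₁))/|ω|^{n+2s} dω is finite and equals π^{n/2} Γ(1−s) / (2^{2s} s Γ(n/2 + s)), where ω₁ denotes the first coordinate of ω. -/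
open MeasureTheory Real Set
open scoped RealInnerProductSpace

lemma gauss_cos (n : ℕ) (i : Fin n) {t : ℝ} (ht : 0 < t) :
    Integrable (fun v : EuclideanSpace ℝ (Fin n) => rexp (-t * ‖v‖ ^ 2) * (1 - Real.cos (v i)))
    ∧ ∫ v : EuclideanSpace ℝ (Fin n), rexp (-t * ‖v‖ ^ 2) * (1 - Real.cos (v i))
      = (π / t) ^ ((n : ℝ) / 2) * (1 - rexp (-(1 / (4 * t)))) := by
  have ht' : 0 < ((t : ℂ)).re := by simpa using ht
  set w : EuclideanSpace ℝ (Fin n) := EuclideanSpace.single i (1 : ℝ) with hw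
  have hinner : ∀ v : EuclideanSpace ℝ (Fin n), ⟪w, v⟫ = v i := by
    intro v
    simp [hw, EuclideanSpace.inner_single_left]
  have hnw : ‖w‖ = 1 := by simp [hw]
  have hfin : (Module.finrank ℝ (EuclideanSpace ℝ (Fin n)) : ℂ) = (n : ℂ) := by
    simp [finrank_euclideanSpace_fin]
  have hci := GaussianFourier.integral_cexp_neg_mul_sq_norm_add (V := EuclideanSpace ℝ (Fin n))
      ht' Complex.I w
  have hii := GaussianFourier.integrable_cexp_neg_mul_sq_norm_add (V := EuclideanSpace ℝ (Fin n))
      ht' Complex.I w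
  have hre : ∀ v : EuclideanSpace ℝ (Fin n),
      (Complex.exp (-(t:ℂ) * ‖v‖ ^ 2 + Complex.I * ⟪w, v⟫)).re
        = rexp (-t * ‖v‖ ^ 2) * Real.cos (v i) := by
    intro v
    rw [Complex.exp_re]
    simp [hinner v, Complex.add_re, Complex.add_im, Complex.mul_re, Complex.mul_im,
      ← Complex.ofReal_pow]
  have hcos : ∫ v : EuclideanSpace ℝ (Fin n), rexp (-t * ‖v‖ ^ 2) * Real.cos (v i)
      = (π / t) ^ ((n : ℝ) / 2) * rexp (-(1 / (4 * t))) := by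
    have h1 := Complex.reCLM.integral_comp_comm hii
    simp only [Complex.reCLM_apply] at h1
    have h1' : ∫ v : EuclideanSpace ℝ (Fin n), rexp (-t * ‖v‖ ^ 2) * Real.cos (v i)
        = (∫ v : EuclideanSpace ℝ (Fin n),
            Complex.exp (-(t:ℂ) * ‖v‖ ^ 2 + Complex.I * ⟪w, v⟫)).re := by
      rw [← h1]
      exact integral_congr_ae (Filter.Eventually.of_forall fun v => (hre v).symm)
    rw [h1', hci, hfin, hnw]
    have key : ((π : ℂ) / (t : ℂ)) ^ ((n : ℂ) / 2)
          * Complex.exp (Complex.I ^ 2 * ((1 : ℝ) : ℂ) ^ 2 / (4 * (t : ℂ)))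
        = (((π / t) ^ ((n : ℝ) / 2) * rexp (-(1 / (4 * t))) : ℝ) : ℂ) := by
      rw [Complex.ofReal_mul]
      congr 1
      · have e1 : ((π : ℂ) / (t : ℂ)) = ((π / t : ℝ) : ℂ) := by push_cast; ring
        have e2 : ((n : ℂ) / 2) = (((n : ℝ) / 2 : ℝ) : ℂ) := by push_cast; ring
        rw [e1, e2, Complex.ofReal_cpow (by positivity)]
      · rw [Complex.ofReal_exp, Complex.I_sq]
        congr 1
        push_cast
        field_simp
    rw [key, Complex.ofReal_re]
  have hig : Integrable (fun v : EuclideanSpace ℝ (Fin n) => rexp (-t * ‖v‖ ^ 2)) := by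
    have := (GaussianFourier.integrable_cexp_neg_mul_sq_norm_add
        (V := EuclideanSpace ℝ (Fin n)) ht' 0 0).re
    refine this.congr (Filter.Eventually.of_forall fun v => ?_)
    simp [Complex.exp_re, Complex.add_re, Complex.mul_re, ← Complex.ofReal_pow,
      Complex.add_im, Complex.mul_im]
  have higc : Integrable (fun v : EuclideanSpace ℝ (Fin n) =>
      rexp (-t * ‖v‖ ^ 2) * Real.cos (v i)) :=
    hii.re.congr (Filter.Eventually.of_forall fun v => (hre v))
  have hgauss : ∫ v : EuclideanSpace ℝ (Fin n), rexp (-t * ‖v‖ ^ 2)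
      = (π / t) ^ ((n : ℝ) / 2) := by
    have := GaussianFourier.integral_rexp_neg_mul_sq_norm (V := EuclideanSpace ℝ (Fin n)) ht
    rwa [finrank_euclideanSpace_fin] at this
  have hfe : (fun v : EuclideanSpace ℝ (Fin n) => rexp (-t * ‖v‖ ^ 2) * (1 - Real.cos (v i)))
      = fun v => rexp (-t * ‖v‖ ^ 2) - rexp (-t * ‖v‖ ^ 2) * Real.cos (v i) := by
    ext v; ring
  refine ⟨hfe ▸ (hig.sub higc), ?_⟩
  rw [hfe, integral_sub hig higc, hgauss, hcos]
  ring

lemma exp_neg_interval (x : ℝ) : ∫ u in (0:ℝ)..x, rexp (-u) = 1 - rexp (-x) := by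
  have := intervalIntegral.integral_comp_neg (a := (0:ℝ)) (b := x) (fun u => rexp u)
  rw [this, integral_exp]
  simp

lemma theta_int {x : ℝ} (hx : 0 < x) :
    ∫ θ in Ioc (0:ℝ) 1, rexp (-(θ * x)) = x⁻¹ * (1 - rexp (-x)) := by
  rw [← intervalIntegral.integral_of_le zero_le_one]
  have h1 : ∫ θ in (0:ℝ)..1, rexp (-(θ * x)) = x⁻¹ • ∫ u in (0*x:ℝ)..(1*x:ℝ), rexp (-u) :=
    intervalIntegral.integral_comp_mul_right (fun u => rexp (-u)) hx.ne'
  rw [h1, zero_mul, one_mul, exp_neg_interval]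
  simp

lemma K_val {s : ℝ} (hs0 : 0 < s) (hs1 : s < 1) :
    IntegrableOn (fun x : ℝ => x ^ (-s - 1) * (1 - rexp (-x))) (Ioi 0)
    ∧ ∫ x in Ioi (0:ℝ), x ^ (-s - 1) * (1 - rexp (-x)) = Real.Gamma (1 - s) / s := by
  have h1s : 0 < 1 - s := by linarith
  set f : ℝ → ℝ := fun x => x ^ (-s - 1) * (1 - rexp (-x)) with hf
  have hpt : ∀ x ∈ Ioi (0:ℝ), ENNReal.ofReal (f x)
      = ∫⁻ θ in Ioc (0:ℝ) 1, ENNReal.ofReal (x ^ (-s) * rexp (-(θ * x))) := by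
    intro x hx
    rw [mem_Ioi] at hx
    have hInt : IntegrableOn (fun θ : ℝ => x ^ (-s) * rexp (-(θ * x))) (Ioc 0 1) :=
      Continuous.integrableOn_Ioc (by fun_prop)
    rw [← MeasureTheory.ofReal_integral_eq_lintegral_ofReal hInt
        (Filter.Eventually.of_forall fun θ => by positivity)]
    rw [integral_const_mul, theta_int hx]
    congr 1
    have h2 : x ^ (-s) * x⁻¹ = x ^ (-s - 1) := by
      rw [← Real.rpow_neg_one x, ← Real.rpow_add hx]
      ring_nf
    calc x ^ (-s - 1) * (1 - rexp (-x)) = x ^ (-s) * x⁻¹ * (1 - rexp (-x)) := by rw [h2]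
      _ = x ^ (-s) * (x⁻¹ * (1 - rexp (-x))) := by ring
  have hswap : ∀ θ ∈ Ioc (0:ℝ) 1,
      (∫⁻ x in Ioi (0:ℝ), ENNReal.ofReal (x ^ (-s) * rexp (-(θ * x))))
        = ENNReal.ofReal (θ ^ (s - 1) * Real.Gamma (1 - s)) := by
    intro θ hθ
    obtain ⟨hθ0, _⟩ := hθ
    have hInt : IntegrableOn (fun x : ℝ => x ^ (-s) * rexp (-(θ * x))) (Ioi 0) := by
      have := integrableOn_rpow_mul_exp_neg_mul_rpow (show (-1:ℝ) < -s by linarith)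
        one_pos hθ0
      refine this.congr_fun (fun x hx => ?_) measurableSet_Ioi
      dsimp only
      rw [Real.rpow_one]
      ring_nf
    rw [← MeasureTheory.ofReal_integral_eq_lintegral_ofReal hInt ?_]
    · congr 1
      have hval := integral_rpow_mul_exp_neg_mul_rpow (p := 1) (q := -s) one_pos
        (show (-1:ℝ) < -s by linarith) hθ0
      have e0 : ∫ x in Ioi (0:ℝ), x ^ (-s) * rexp (-(θ * x))
          = ∫ x in Ioi (0:ℝ), x ^ (-s) * rexp (-θ * x ^ (1:ℝ)) := by
        refine setIntegral_congr_fun measurableSet_Ioi (fun x hx => ?_)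
        rw [Real.rpow_one]
        ring_nf
      rw [e0, hval]
      have e1 : -(-s + 1) / 1 = s - 1 := by ring
      have e2 : (-s + 1) / 1 = 1 - s := by ring
      rw [e1, e2]
      ring
    · filter_upwards [ae_restrict_mem measurableSet_Ioi] with x hx
      have : (0:ℝ) < x := hx
      positivity
  have hmeas : AEMeasurable (fun p : ℝ × ℝ => ENNReal.ofReal (p.1 ^ (-s) * rexp (-(p.2 * p.1))))
      (((volume : Measure ℝ).restrict (Ioi 0)).prod ((volume : Measure ℝ).restrict (Ioc 0 1))) := by
    apply Measurable.aemeasurable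
    apply Measurable.ennreal_ofReal
    fun_prop
  have hmain : ∫⁻ x in Ioi (0:ℝ), ENNReal.ofReal (f x)
      = ENNReal.ofReal (Real.Gamma (1 - s) / s) := by
    calc ∫⁻ x in Ioi (0:ℝ), ENNReal.ofReal (f x)
        = ∫⁻ x in Ioi (0:ℝ), ∫⁻ θ in Ioc (0:ℝ) 1,
            ENNReal.ofReal (x ^ (-s) * rexp (-(θ * x))) := by
          refine setLIntegral_congr_fun measurableSet_Ioi ?_
          exact hpt
      _ = ∫⁻ θ in Ioc (0:ℝ) 1, ∫⁻ x in Ioi (0:ℝ),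
            ENNReal.ofReal (x ^ (-s) * rexp (-(θ * x))) := lintegral_lintegral_swap hmeas
      _ = ∫⁻ θ in Ioc (0:ℝ) 1, ENNReal.ofReal (θ ^ (s - 1) * Real.Gamma (1 - s)) := by
          refine setLIntegral_congr_fun measurableSet_Ioc ?_
          exact hswap
      _ = ENNReal.ofReal (∫ θ in Ioc (0:ℝ) 1, θ ^ (s - 1) * Real.Gamma (1 - s)) := by
          rw [← MeasureTheory.ofReal_integral_eq_lintegral_ofReal]
          · exact (intervalIntegral.intervalIntegrable_rpow'
              (show (-1:ℝ) < s - 1 by linarith)).1.mul_const _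
          · filter_upwards [ae_restrict_mem measurableSet_Ioc] with θ hθ
            have h1 : (0:ℝ) < θ := hθ.1
            have h2 := Real.Gamma_pos_of_pos h1s
            positivity
      _ = ENNReal.ofReal (Real.Gamma (1 - s) / s) := by
          congr 1
          rw [integral_mul_const, ← intervalIntegral.integral_of_le zero_le_one,
            integral_rpow (Or.inl (show (-1:ℝ) < s - 1 by linarith))]
          rw [Real.zero_rpow (show s - 1 + 1 ≠ 0 by simpa using hs0.ne'), Real.one_rpow]
          field_simp
          simp only [sub_zero, one_mul, sub_add_cancel]
          exact div_self hs0.ne'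
  have hfm : Measurable f := by apply Measurable.mul <;> fun_prop
  have hnn : 0 ≤ᵐ[(volume : Measure ℝ).restrict (Ioi 0)] f := by
    filter_upwards [ae_restrict_mem measurableSet_Ioi] with x hx
    have hx' : (0:ℝ) < x := hx
    have h1 : rexp (-x) ≤ 1 := by
      rw [show (1:ℝ) = rexp 0 by simp]
      exact Real.exp_le_exp.mpr (by linarith)
    have h2 : (0:ℝ) ≤ x ^ (-s - 1) := Real.rpow_nonneg hx'.le _
    have h3 : (0:ℝ) ≤ 1 - rexp (-x) := by linarith
    exact mul_nonneg h2 h3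
  have hint : IntegrableOn f (Ioi 0) := by
    refine ⟨hfm.aestronglyMeasurable, ?_⟩
    rw [hasFiniteIntegral_iff_ofReal hnn, hmain]
    exact ENNReal.ofReal_lt_top
  refine ⟨hint, ?_⟩
  rw [integral_eq_lintegral_of_nonneg_ae hnn hfm.aestronglyMeasurable, hmain,
    ENNReal.toReal_ofReal]
  have := Real.Gamma_pos_of_pos h1s
  positivity

lemma one_sub_exp_neg_le {y : ℝ} (hy : 0 ≤ y) : 1 - rexp (-y) ≤ y := by
  have := Real.add_one_le_exp (-y)
  linarith

lemma one_sub_exp_neg_nonneg {y : ℝ} (hy : 0 ≤ y) : 0 ≤ 1 - rexp (-y) := by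
  have : rexp (-y) ≤ rexp 0 := Real.exp_le_exp.mpr (by linarith)
  simp only [Real.exp_zero] at this
  linarith

lemma J_val {s : ℝ} (hs0 : 0 < s) (hs1 : s < 1) :
    IntegrableOn (fun t : ℝ => t ^ (s - 1) * (1 - rexp (-(1 / (4 * t))))) (Ioi 0)
    ∧ ∫ t in Ioi (0:ℝ), t ^ (s - 1) * (1 - rexp (-(1 / (4 * t))))
      = 4 ^ (-s) * (Real.Gamma (1 - s) / s) := by
  set g : ℝ → ℝ := fun y => y ^ (-s - 1) * (1 - rexp (-(y / 4))) with hg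
  have hm : Measurable fun t : ℝ => t ^ (s - 1) * (1 - rexp (-(1 / (4 * t)))) := by
    apply Measurable.mul <;> fun_prop
  constructor
  · have h1 : IntegrableOn (fun t : ℝ => t ^ (s - 1) * (1 - rexp (-(1 / (4 * t))))) (Ioc 0 1) := by
      refine Integrable.mono' ((intervalIntegral.intervalIntegrable_rpow'
        (show (-1:ℝ) < s - 1 by linarith)).1) hm.aestronglyMeasurable ?_
      filter_upwards [ae_restrict_mem measurableSet_Ioc] with t ht
      have ht0 : (0:ℝ) < t := ht.1
      have hy : (0:ℝ) ≤ 1 / (4 * t) := by positivity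
      have h2 := one_sub_exp_neg_nonneg hy
      have h3 : 1 - rexp (-(1 / (4 * t))) ≤ 1 := by
        have := Real.exp_pos (-(1 / (4 * t))); linarith
      rw [Real.norm_eq_abs, abs_of_nonneg (mul_nonneg (Real.rpow_nonneg ht0.le _) h2)]
      exact mul_le_of_le_one_right (Real.rpow_nonneg ht0.le _) h3
    have h2 : IntegrableOn (fun t : ℝ => t ^ (s - 1) * (1 - rexp (-(1 / (4 * t))))) (Ioi 1) := by
      refine Integrable.mono' (((integrableOn_Ioi_rpow_of_lt
        (show s - 2 < -1 by linarith) one_pos)).const_mul (1/4)) hm.aestronglyMeasurable ?_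
      filter_upwards [ae_restrict_mem measurableSet_Ioi] with t ht
      have ht0 : (0:ℝ) < t := lt_trans one_pos ht
      have hy : (0:ℝ) ≤ 1 / (4 * t) := by positivity
      have h2 := one_sub_exp_neg_nonneg hy
      rw [Real.norm_eq_abs, abs_of_nonneg (mul_nonneg (Real.rpow_nonneg ht0.le _) h2)]
      calc t ^ (s - 1) * (1 - rexp (-(1 / (4 * t))))
          ≤ t ^ (s - 1) * (1 / (4 * t)) :=
            mul_le_mul_of_nonneg_left (one_sub_exp_neg_le hy) (Real.rpow_nonneg ht0.le _)
        _ = 1 / 4 * t ^ (s - 2) := by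
            rw [show t ^ (s - 2) = t ^ (s - 1) * t⁻¹ by
              rw [← Real.rpow_neg_one t, ← Real.rpow_add ht0]; ring_nf]
            field_simp
    have := h1.union h2
    rwa [Ioc_union_Ioi_eq_Ioi zero_le_one] at this
  · have e1 := integral_comp_rpow_Ioi g (p := (-1:ℝ)) (by norm_num)
    have e1' : ∫ t in Ioi (0:ℝ), t ^ (s - 1) * (1 - rexp (-(1 / (4 * t))))
        = ∫ y in Ioi (0:ℝ), g y := by
      rw [← e1]
      refine setIntegral_congr_fun measurableSet_Ioi (fun x hx => ?_)
      rw [mem_Ioi] at hx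
      simp only [smul_eq_mul, hg]
      have h4 : (x ^ (-1:ℝ)) ^ (-s - 1) = x ^ (s + 1) := by
        rw [← Real.rpow_mul hx.le]; congr 1; ring
      have h5 : x ^ (-1:ℝ) / 4 = 1 / (4 * x) := by
        rw [Real.rpow_neg_one]; field_simp
      have h6 : |(-1:ℝ)| * x ^ ((-1:ℝ) - 1) = x ^ (-2:ℝ) := by norm_num
      rw [h4, h5, h6, show x ^ (-2:ℝ) * (x ^ (s+1) * (1 - rexp (-(1/(4*x)))))
          = (x ^ (-2:ℝ) * x ^ (s+1)) * (1 - rexp (-(1/(4*x)))) by ring,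
        ← Real.rpow_add hx, show (-2:ℝ) + (s+1) = s - 1 by ring]
    have e2 := integral_comp_mul_left_Ioi g 0 (show (0:ℝ) < 4 by norm_num)
    rw [mul_zero] at e2
    have e3 : ∫ x in Ioi (0:ℝ), g (4 * x)
        = 4 ^ (-s - 1) * (Real.Gamma (1 - s) / s) := by
      have : ∀ x ∈ Ioi (0:ℝ), g (4 * x) = 4 ^ (-s - 1) * (x ^ (-s - 1) * (1 - rexp (-x))) := by
        intro x hx
        rw [mem_Ioi] at hx
        simp only [hg]
        rw [Real.mul_rpow (by norm_num) hx.le]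
        rw [show (4:ℝ) * x / 4 = x by ring]
        ring
      rw [setIntegral_congr_fun measurableSet_Ioi this, integral_const_mul, (K_val hs0 hs1).2]
    rw [e1', show (∫ y in Ioi (0:ℝ), g y) = 4 * ∫ x in Ioi (0:ℝ), g (4 * x) by
      rw [e2]; simp, e3]
    rw [show (4:ℝ) * (4 ^ (-s - 1) * (Real.Gamma (1 - s) / s))
        = (4 * 4 ^ (-s - 1)) * (Real.Gamma (1 - s) / s) by ring]
    congr 1
    rw [show (4:ℝ) * 4 ^ (-s-1) = 4 ^ (1:ℝ) * 4 ^ (-s-1) by rw [Real.rpow_one],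
      ← Real.rpow_add (by norm_num)]
    norm_num

theorem stmt_4 (n : ℕ) (hn : 0 < n) (s : ℝ) (hs0 : 0 < s) (hs1 : s < 1) :
    Integrable (fun ω : EuclideanSpace ℝ (Fin n) =>
      (1 - Real.cos (ω ⟨0, hn⟩)) / ‖ω‖ ^ ((n : ℝ) + 2 * s)) ∧
    ∫ ω : EuclideanSpace ℝ (Fin n), (1 - Real.cos (ω ⟨0, hn⟩)) / ‖ω‖ ^ ((n : ℝ) + 2 * s)
      = Real.pi ^ ((n : ℝ) / 2) * Real.Gamma (1 - s)
          / (2 ^ (2 * s) * s * Real.Gamma ((n : ℝ) / 2 + s)) := by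
  set i0 : Fin n := ⟨0, hn⟩ with hi0
  set a : ℝ := (n : ℝ) / 2 + s with ha_def
  have ha : 0 < a := by positivity
  have hΓ : 0 < Real.Gamma a := Real.Gamma_pos_of_pos ha
  have hΓ1s : 0 < Real.Gamma (1 - s) := Real.Gamma_pos_of_pos (by linarith)
  set G : EuclideanSpace ℝ (Fin n) → ℝ :=
      fun ω => (1 - Real.cos (ω i0)) / ‖ω‖ ^ ((n : ℝ) + 2 * s) * Real.Gamma a with hGdef
  have hGm : Measurable G := by
    apply Measurable.mul _ measurable_const
    fun_prop
  have hGnn : ∀ ω, 0 ≤ G ω := by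
    intro ω
    have h1 : Real.cos (ω i0) ≤ 1 := Real.cos_le_one _
    exact mul_nonneg (div_nonneg (by linarith) (Real.rpow_nonneg (norm_nonneg ω) _)) hΓ.le
  -- pointwise subordination formula
  have hA : ∀ ω : EuclideanSpace ℝ (Fin n), ω ≠ 0 →
      ENNReal.ofReal (G ω)
        = ∫⁻ t in Ioi (0:ℝ), ENNReal.ofReal
            (t ^ (a - 1) * (rexp (-t * ‖ω‖ ^ 2) * (1 - Real.cos (ω i0)))) := by
    intro ω hω
    have hb : (0:ℝ) < ‖ω‖ ^ 2 := by
      have : 0 < ‖ω‖ := norm_pos_iff.mpr hω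
      positivity
    have hc : (0:ℝ) ≤ 1 - Real.cos (ω i0) := by
      have := Real.cos_le_one (ω i0); linarith
    have hInt : IntegrableOn (fun t : ℝ =>
        t ^ (a - 1) * (rexp (-t * ‖ω‖ ^ 2) * (1 - Real.cos (ω i0)))) (Ioi 0) := by
      have h0 : IntegrableOn (fun t : ℝ =>
          t ^ (a - 1) * rexp (-(‖ω‖ ^ 2) * t ^ (1:ℝ)) * (1 - Real.cos (ω i0))) (Ioi 0) :=
        (integrableOn_rpow_mul_exp_neg_mul_rpow
          (show (-1:ℝ) < a - 1 by linarith) one_pos hb).mul_const (1 - Real.cos (ω i0))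
      refine h0.congr_fun (fun t ht => ?_) measurableSet_Ioi
      dsimp only
      rw [Real.rpow_one]; ring_nf
    rw [← MeasureTheory.ofReal_integral_eq_lintegral_ofReal hInt ?_]
    swap
    · filter_upwards [ae_restrict_mem measurableSet_Ioi] with t ht
      have ht0 : (0:ℝ) < t := ht
      have h2 := Real.exp_pos (-t * ‖ω‖ ^ 2)
      have h3 := Real.rpow_nonneg ht0.le (a - 1)
      positivity
    congr 1
    have e0 : ∫ t in Ioi (0:ℝ), t ^ (a - 1) * (rexp (-t * ‖ω‖ ^ 2) * (1 - Real.cos (ω i0)))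
        = (∫ t in Ioi (0:ℝ), t ^ (a - 1) * rexp (-(‖ω‖ ^ 2) * t ^ (1:ℝ)))
            * (1 - Real.cos (ω i0)) := by
      rw [← integral_mul_const]
      refine setIntegral_congr_fun measurableSet_Ioi (fun t ht => ?_)
      rw [Real.rpow_one]; ring_nf
    rw [e0, integral_rpow_mul_exp_neg_mul_rpow one_pos (show (-1:ℝ) < a - 1 by linarith) hb,
      show -(a - 1 + 1) / 1 = -a by ring, show (a - 1 + 1) / 1 = a by ring]
    have e1 : ((‖ω‖ ^ 2 : ℝ)) ^ (-a) = (‖ω‖ ^ ((n:ℝ) + 2 * s))⁻¹ := by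
      rw [← Real.rpow_natCast ‖ω‖ 2, ← Real.rpow_mul (norm_nonneg ω),
        show ((2:ℕ):ℝ) * -a = -((n:ℝ) + 2 * s) by rw [ha_def]; push_cast; ring,
        Real.rpow_neg (norm_nonneg ω)]
    rw [e1]
    simp only [hGdef]
    rw [div_eq_mul_inv]
    ring
  have hae : ∀ᵐ ω : EuclideanSpace ℝ (Fin n), ω ≠ 0 := by
    haveI : Nonempty (Fin n) := ⟨i0⟩
    have h : (volume : Measure (EuclideanSpace ℝ (Fin n))) {0} = 0 := measure_singleton _
    rw [MeasureTheory.ae_iff]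
    simpa using h
  have hmeas : AEMeasurable (fun p : (EuclideanSpace ℝ (Fin n)) × ℝ =>
      ENNReal.ofReal (p.2 ^ (a - 1) * (rexp (-p.2 * ‖p.1‖ ^ 2) * (1 - Real.cos (p.1 i0)))))
      ((volume : Measure (EuclideanSpace ℝ (Fin n))).prod
        ((volume : Measure ℝ).restrict (Ioi 0))) := by
    apply Measurable.aemeasurable
    apply Measurable.ennreal_ofReal
    apply Measurable.mul
    · fun_prop
    · apply Continuous.measurable
      exact (Real.continuous_exp.comp ((continuous_snd.neg).mul
          ((continuous_norm.comp continuous_fst).pow 2))).mul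
        (continuous_const.sub (Real.continuous_cos.comp
          ((EuclideanSpace.proj i0).continuous.comp continuous_fst)))
  have hmain : ∫⁻ ω : EuclideanSpace ℝ (Fin n), ENNReal.ofReal (G ω)
      = ENNReal.ofReal (π ^ ((n:ℝ)/2) * (4 ^ (-s) * (Real.Gamma (1 - s) / s))) := by
    calc ∫⁻ ω : EuclideanSpace ℝ (Fin n), ENNReal.ofReal (G ω)
        = ∫⁻ ω : EuclideanSpace ℝ (Fin n), ∫⁻ t in Ioi (0:ℝ), ENNReal.ofReal
            (t ^ (a - 1) * (rexp (-t * ‖ω‖ ^ 2) * (1 - Real.cos (ω i0)))) :=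
          lintegral_congr_ae (hae.mono fun ω hω => hA ω hω)
      _ = ∫⁻ t in Ioi (0:ℝ), ∫⁻ ω : EuclideanSpace ℝ (Fin n), ENNReal.ofReal
            (t ^ (a - 1) * (rexp (-t * ‖ω‖ ^ 2) * (1 - Real.cos (ω i0)))) :=
          lintegral_lintegral_swap hmeas
      _ = ∫⁻ t in Ioi (0:ℝ), ENNReal.ofReal
            (π ^ ((n:ℝ)/2) * (t ^ (s - 1) * (1 - rexp (-(1 / (4 * t)))))) := by
          refine setLIntegral_congr_fun measurableSet_Ioi
            (fun t ht => ?_)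
          rw [mem_Ioi] at ht
          obtain ⟨hBi, hBv⟩ := gauss_cos n i0 ht
          have step1 : ∀ ω : EuclideanSpace ℝ (Fin n),
              ENNReal.ofReal (t ^ (a - 1) * (rexp (-t * ‖ω‖ ^ 2) * (1 - Real.cos (ω i0))))
              = ENNReal.ofReal (t ^ (a - 1))
                  * ENNReal.ofReal (rexp (-t * ‖ω‖ ^ 2) * (1 - Real.cos (ω i0))) :=
            fun ω => ENNReal.ofReal_mul (Real.rpow_nonneg ht.le _)
          calc ∫⁻ ω : EuclideanSpace ℝ (Fin n), ENNReal.ofReal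
                (t ^ (a - 1) * (rexp (-t * ‖ω‖ ^ 2) * (1 - Real.cos (ω i0))))
              = ∫⁻ ω : EuclideanSpace ℝ (Fin n), ENNReal.ofReal (t ^ (a - 1))
                  * ENNReal.ofReal (rexp (-t * ‖ω‖ ^ 2) * (1 - Real.cos (ω i0))) :=
                lintegral_congr fun ω => step1 ω
            _ = ENNReal.ofReal (t ^ (a - 1)) * ∫⁻ ω : EuclideanSpace ℝ (Fin n),
                  ENNReal.ofReal (rexp (-t * ‖ω‖ ^ 2) * (1 - Real.cos (ω i0))) :=
                lintegral_const_mul' _ _ ENNReal.ofReal_ne_top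
            _ = ENNReal.ofReal (t ^ (a - 1))
                  * ENNReal.ofReal ((π / t) ^ ((n:ℝ)/2) * (1 - rexp (-(1 / (4 * t))))) := by
                rw [← MeasureTheory.ofReal_integral_eq_lintegral_ofReal hBi ?_, hBv]
                filter_upwards with ω
                have h1 : Real.cos (ω i0) ≤ 1 := Real.cos_le_one _
                have h2 := Real.exp_pos (-t * ‖ω‖ ^ 2)
                have h3 : (0:ℝ) ≤ 1 - Real.cos (ω i0) := by linarith
                positivity
            _ = ENNReal.ofReal
                  (π ^ ((n:ℝ)/2) * (t ^ (s - 1) * (1 - rexp (-(1 / (4 * t)))))) := by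
                rw [← ENNReal.ofReal_mul (Real.rpow_nonneg ht.le _)]
                congr 1
                rw [Real.div_rpow Real.pi_pos.le ht.le]
                rw [show t ^ (a - 1) * (π ^ ((n:ℝ)/2) / t ^ ((n:ℝ)/2)
                      * (1 - rexp (-(1 / (4 * t)))))
                    = π ^ ((n:ℝ)/2) * ((t ^ (a - 1) / t ^ ((n:ℝ)/2))
                      * (1 - rexp (-(1 / (4 * t))))) by ring]
                rw [← Real.rpow_sub ht, show a - 1 - (n:ℝ)/2 = s - 1 by rw [ha_def]; ring]
      _ = ENNReal.ofReal (π ^ ((n:ℝ)/2) * (4 ^ (-s) * (Real.Gamma (1 - s) / s))) := by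
          rw [← MeasureTheory.ofReal_integral_eq_lintegral_ofReal
            ((J_val hs0 hs1).1.const_mul _) ?_]
          · rw [integral_const_mul, (J_val hs0 hs1).2]
          · filter_upwards [ae_restrict_mem measurableSet_Ioi] with t ht
            have ht0 : (0:ℝ) < t := ht
            have h1 := one_sub_exp_neg_nonneg (show (0:ℝ) ≤ 1 / (4 * t) by positivity)
            have h2 := Real.rpow_nonneg ht0.le (s - 1)
            have h3 := Real.rpow_nonneg Real.pi_pos.le ((n:ℝ)/2)
            positivity
  have hGi : Integrable G := by
    refine ⟨hGm.aestronglyMeasurable, ?_⟩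
    rw [hasFiniteIntegral_iff_ofReal (Filter.Eventually.of_forall hGnn), hmain]
    exact ENNReal.ofReal_lt_top
  have hGval : ∫ ω : EuclideanSpace ℝ (Fin n), G ω
      = π ^ ((n:ℝ)/2) * (4 ^ (-s) * (Real.Gamma (1 - s) / s)) := by
    rw [integral_eq_lintegral_of_nonneg_ae (Filter.Eventually.of_forall hGnn)
      hGm.aestronglyMeasurable, hmain, ENNReal.toReal_ofReal]
    have h3 := Real.rpow_nonneg Real.pi_pos.le ((n:ℝ)/2)
    have h4 := Real.rpow_nonneg (show (0:ℝ) ≤ 4 by norm_num) (-s)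
    positivity
  have hFG : (fun ω : EuclideanSpace ℝ (Fin n) =>
      (1 - Real.cos (ω i0)) / ‖ω‖ ^ ((n : ℝ) + 2 * s)) = fun ω => (Real.Gamma a)⁻¹ * G ω := by
    funext ω
    simp only [hGdef]
    field_simp
  have h4s : (2:ℝ) ^ (2 * s) = 4 ^ s := by
    rw [show (4:ℝ) = 2 ^ ((2:ℕ):ℝ) by rw [Real.rpow_natCast]; norm_num,
      ← Real.rpow_mul (by norm_num : (0:ℝ) ≤ 2)]
    norm_num
  constructor
  · rw [hFG]
    exact hGi.const_mul _
  · rw [hFG, integral_const_mul, hGval, h4s,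
      Real.rpow_neg (show (0:ℝ) ≤ 4 by norm_num)]
    have h5 : (0:ℝ) < 4 ^ s := Real.rpow_pos_of_pos (by norm_num) s
    field_simp
end

section
/- Generalized fractional coarea formula: for any s ∈ (0,1), any measurable set Ω ⊆ ℝⁿ, and any measurable function u : Ω → [0,1], one has (1/2) ∫_Ω ∫_Ω |u(x)−u(y)|/|x−y|^{n+s} dx dy = ∫₀¹ ( ∫_{ {x ∈ Ω : u(x) > t} } ∫_{ {y ∈ Ω : u(y) ≤ t} } dx dy / |x−y|^{n+s} ) dt. -/
open MeasureTheory
open scoped ENNReal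

lemma vol_Ico_inter (a b : ℝ) (hb : 0 ≤ b) (ha : a ≤ 1) :
    volume (Set.Ico b a ∩ Set.Ioo 0 1) = ENNReal.ofReal (a - b) := by
  have hsub : Set.Ioo b a ⊆ Set.Ico b a ∩ Set.Ioo 0 1 := by
    intro t ht
    exact ⟨Set.Ioo_subset_Ico_self ht,
      Set.mem_Ioo.mpr ⟨lt_of_le_of_lt hb ht.1, lt_of_lt_of_le ht.2 ha⟩⟩
  refine le_antisymm ?_ ?_
  · calc volume (Set.Ico b a ∩ Set.Ioo 0 1) ≤ volume (Set.Ico b a) :=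
        measure_mono Set.inter_subset_left
    _ = ENNReal.ofReal (a - b) := Real.volume_Ico
  · calc ENNReal.ofReal (a - b) = volume (Set.Ioo b a) := Real.volume_Ioo.symm
    _ ≤ _ := measure_mono hsub

lemma ofReal_abs_sub_eq (a b : ℝ) (ha : a ∈ Set.Icc (0:ℝ) 1) (hb : b ∈ Set.Icc (0:ℝ) 1) :
    ENNReal.ofReal |a - b|
      = volume (Set.Ico b a ∩ Set.Ioo 0 1) + volume (Set.Ico a b ∩ Set.Ioo 0 1) := by
  rw [vol_Ico_inter a b hb.1 ha.2, vol_Ico_inter b a ha.1 hb.2]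
  rcases le_total b a with h | h
  · rw [abs_of_nonneg (by linarith : (0:ℝ) ≤ a - b),
      ENNReal.ofReal_of_nonpos (by linarith : b - a ≤ 0), add_zero]
  · rw [abs_of_nonpos (by linarith : a - b ≤ 0),
      ENNReal.ofReal_of_nonpos (by linarith : a - b ≤ 0), zero_add, neg_sub]

lemma ind_lintegral {α : Type*} [MeasurableSpace α] (μ : Measure α) (p : α → Prop)
    [DecidablePred p] (hp : MeasurableSet {z | p z}) (f : α → ℝ≥0∞) :
    ∫⁻ z, (if p z then (1:ℝ≥0∞) else 0) * f z ∂μ = ∫⁻ z in {z | p z}, f z ∂μ := by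
  rw [← lintegral_indicator hp]
  apply lintegral_congr
  intro z
  by_cases h : p z <;> simp [h, Set.indicator_apply]

theorem stmt_8 (n : ℕ) (s : ℝ) (hs0 : 0 < s) (hs1 : s < 1)
    (Ω : Set (EuclideanSpace ℝ (Fin n))) (hΩ : MeasurableSet Ω)
    (u : EuclideanSpace ℝ (Fin n) → ℝ) (hu : Measurable u)
    (hrange : ∀ x ∈ Ω, u x ∈ Set.Icc (0 : ℝ) 1) :
    (1 / 2 : ℝ≥0∞) *
        ∫⁻ x in Ω, ∫⁻ y in Ω, ENNReal.ofReal (|u x - u y| / ‖x - y‖ ^ ((n : ℝ) + s))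
      = ∫⁻ t in Set.Ioo (0 : ℝ) 1,
          ∫⁻ x in {x | x ∈ Ω ∧ t < u x}, ∫⁻ y in {y | y ∈ Ω ∧ u y ≤ t},
            ENNReal.ofReal (1 / ‖x - y‖ ^ ((n : ℝ) + s)) := by
  set k : EuclideanSpace ℝ (Fin n) → EuclideanSpace ℝ (Fin n) → ℝ≥0∞ :=
    fun x y => ENNReal.ofReal (1 / ‖x - y‖ ^ ((n : ℝ) + s)) with hk_def
  have hexp : (0:ℝ) ≤ (n : ℝ) + s := by positivity
  have hk : Measurable (fun p : EuclideanSpace ℝ (Fin n) × EuclideanSpace ℝ (Fin n) =>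
      k p.1 p.2) := by
    apply Measurable.ennreal_ofReal
    have h1 : Measurable (fun p : EuclideanSpace ℝ (Fin n) × EuclideanSpace ℝ (Fin n) =>
        ‖p.1 - p.2‖) := (measurable_fst.sub measurable_snd).norm
    have h2 : Measurable (fun x : ℝ => x ^ ((n:ℝ) + s)) :=
      (Real.continuous_rpow_const hexp).measurable
    exact (h2.comp h1).const_div 1
  have ksymm : ∀ x y, k x y = k y x := by
    intro x y; simp only [hk_def, norm_sub_rev]
  set G : ℝ → EuclideanSpace ℝ (Fin n) → EuclideanSpace ℝ (Fin n) → ℝ≥0∞ := fun t x y =>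
    ((if u y ≤ t ∧ t < u x then (1:ℝ≥0∞) else 0)
      + (if u x ≤ t ∧ t < u y then (1:ℝ≥0∞) else 0)) * k x y with hG_def
  have hmu1 : Measurable fun q : ℝ × EuclideanSpace ℝ (Fin n) × EuclideanSpace ℝ (Fin n) =>
      u q.2.1 := hu.comp measurable_snd.fst
  have hmu2 : Measurable fun q : ℝ × EuclideanSpace ℝ (Fin n) × EuclideanSpace ℝ (Fin n) =>
      u q.2.2 := hu.comp measurable_snd.snd
  have hG : Measurable (fun q : ℝ × EuclideanSpace ℝ (Fin n) × EuclideanSpace ℝ (Fin n) =>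
      G q.1 q.2.1 q.2.2) := by
    apply Measurable.mul
    · apply Measurable.add
      · apply Measurable.ite _ measurable_const measurable_const
        exact (measurableSet_le hmu2 measurable_fst).inter
            (measurableSet_lt measurable_fst hmu1)
      · apply Measurable.ite _ measurable_const measurable_const
        exact (measurableSet_le hmu1 measurable_fst).inter
            (measurableSet_lt measurable_fst hmu2)
    · exact hk.comp measurable_snd
  set μ : Measure (EuclideanSpace ℝ (Fin n)) := volume.restrict Ω with hμ_def
  set lam : Measure ℝ := volume.restrict (Set.Ioo (0:ℝ) 1) with hlam_def
  -- step 1 : pointwise identity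
  have step1 : ∀ x ∈ Ω, ∀ y ∈ Ω,
      ENNReal.ofReal (|u x - u y| / ‖x - y‖ ^ ((n : ℝ) + s))
        = ∫⁻ t, G t x y ∂lam := by
    intro x hx y hy
    have hf1 : Measurable (fun t : ℝ => (if u y ≤ t ∧ t < u x then (1:ℝ≥0∞) else 0)) := by
      apply Measurable.ite _ measurable_const measurable_const
      exact (measurableSet_le measurable_const measurable_id).inter
        (measurableSet_lt measurable_id measurable_const)
    have hf2 : Measurable (fun t : ℝ => (if u x ≤ t ∧ t < u y then (1:ℝ≥0∞) else 0)) := by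
      apply Measurable.ite _ measurable_const measurable_const
      exact (measurableSet_le measurable_const measurable_id).inter
        (measurableSet_lt measurable_id measurable_const)
    have hone : ∀ (b a : ℝ), ∫⁻ t, (if b ≤ t ∧ t < a then (1:ℝ≥0∞) else 0) ∂lam
        = volume (Set.Ico b a ∩ Set.Ioo 0 1) := by
      intro b a
      have heq : (fun t : ℝ => (if b ≤ t ∧ t < a then (1:ℝ≥0∞) else 0))
          = (Set.Ico b a).indicator (fun _ => 1) := by
        funext t
        by_cases h : b ≤ t ∧ t < a <;> simp [Set.indicator_apply, Set.mem_Ico, h]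
      rw [heq, lintegral_indicator measurableSet_Ico, hlam_def,
        Measure.restrict_restrict measurableSet_Ico]
      simp
    calc ENNReal.ofReal (|u x - u y| / ‖x - y‖ ^ ((n : ℝ) + s))
        = ENNReal.ofReal (|u x - u y| * (1 / ‖x - y‖ ^ ((n : ℝ) + s))) := by
          rw [mul_one_div]
      _ = ENNReal.ofReal |u x - u y| * k x y := ENNReal.ofReal_mul (abs_nonneg _)
      _ = (volume (Set.Ico (u y) (u x) ∩ Set.Ioo 0 1)
            + volume (Set.Ico (u x) (u y) ∩ Set.Ioo 0 1)) * k x y := by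
          rw [ofReal_abs_sub_eq (u x) (u y) (hrange x hx) (hrange y hy)]
      _ = (∫⁻ t, ((if u y ≤ t ∧ t < u x then (1:ℝ≥0∞) else 0)
            + (if u x ≤ t ∧ t < u y then (1:ℝ≥0∞) else 0)) ∂lam) * k x y := by
          rw [lintegral_add_left hf1, hone, hone]
      _ = ∫⁻ t, G t x y ∂lam := by
          exact (lintegral_mul_const _ (hf1.add hf2)).symm
  -- step 2 : rewrite and swap
  have step2 : ∫⁻ x, ∫⁻ y, ENNReal.ofReal (|u x - u y| / ‖x - y‖ ^ ((n : ℝ) + s)) ∂μ ∂μ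
      = ∫⁻ t, ∫⁻ x, ∫⁻ y, G t x y ∂μ ∂μ ∂lam := by
    have e1 : ∫⁻ x, ∫⁻ y, ENNReal.ofReal (|u x - u y| / ‖x - y‖ ^ ((n : ℝ) + s)) ∂μ ∂μ
        = ∫⁻ x, ∫⁻ t, ∫⁻ y, G t x y ∂μ ∂lam ∂μ := by
      apply lintegral_congr_ae
      filter_upwards [ae_restrict_mem hΩ] with x hx
      have e2 : ∫⁻ y, ENNReal.ofReal (|u x - u y| / ‖x - y‖ ^ ((n : ℝ) + s)) ∂μ
          = ∫⁻ y, ∫⁻ t, G t x y ∂lam ∂μ := by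
        apply lintegral_congr_ae
        filter_upwards [ae_restrict_mem hΩ] with y hy
        exact step1 x hx y hy
      rw [e2]
      exact lintegral_lintegral_swap
        ((hG.comp ((measurable_snd.prodMk
          (measurable_const.prodMk measurable_fst)) :
            Measurable (fun p : EuclideanSpace ℝ (Fin n) × ℝ => (p.2, x, p.1))))).aemeasurable
    rw [e1]
    exact lintegral_lintegral_swap
      ((Measurable.lintegral_prod_right
        (f := fun (p : EuclideanSpace ℝ (Fin n) × ℝ) y => G p.2 p.1 y)
        (hG.comp (((measurable_fst.snd).prodMk
          ((measurable_fst.fst).prodMk measurable_snd)) :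
            Measurable (fun q : (EuclideanSpace ℝ (Fin n) × ℝ) × EuclideanSpace ℝ (Fin n) =>
              (q.1.2, q.1.1, q.2)))))).aemeasurable
  -- step 3 : inner double integral for each t
  have step3 : ∀ t : ℝ, ∫⁻ x, ∫⁻ y, G t x y ∂μ ∂μ
      = (∫⁻ x in {x | x ∈ Ω ∧ t < u x}, ∫⁻ y in {y | y ∈ Ω ∧ u y ≤ t}, k x y)
        + (∫⁻ x in {x | x ∈ Ω ∧ u x ≤ t}, ∫⁻ y in {y | y ∈ Ω ∧ t < u y}, k x y) := by
    intro t
    have hIic : MeasurableSet {z : EuclideanSpace ℝ (Fin n) | u z ≤ t} :=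
      measurableSet_le hu measurable_const
    have hIoi : MeasurableSet {z : EuclideanSpace ℝ (Fin n) | t < u z} :=
      measurableSet_lt measurable_const hu
    have hAeq : {z : EuclideanSpace ℝ (Fin n) | t < u z} ∩ Ω = {x | x ∈ Ω ∧ t < u x} :=
      Set.ext fun x => and_comm
    have hBeq : {z : EuclideanSpace ℝ (Fin n) | u z ≤ t} ∩ Ω = {y | y ∈ Ω ∧ u y ≤ t} :=
      Set.ext fun x => and_comm
    set C : EuclideanSpace ℝ (Fin n) → ℝ≥0∞ :=
      fun x => ∫⁻ y in {y | y ∈ Ω ∧ u y ≤ t}, k x y with hC_def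
    set D : EuclideanSpace ℝ (Fin n) → ℝ≥0∞ :=
      fun x => ∫⁻ y in {y | y ∈ Ω ∧ t < u y}, k x y with hD_def
    have hC : Measurable C :=
      Measurable.lintegral_prod_right (f := k)
        (ν := volume.restrict {y | y ∈ Ω ∧ u y ≤ t}) hk
    have inner : ∀ x, ∫⁻ y, G t x y ∂μ
        = (if t < u x then (1:ℝ≥0∞) else 0) * C x
          + (if u x ≤ t then (1:ℝ≥0∞) else 0) * D x := by
      intro x
      rcases lt_or_ge t (u x) with h | h
      · have h' : ¬ u x ≤ t := not_le.mpr h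
        rw [if_pos h, if_neg h', one_mul, zero_mul, add_zero]
        calc ∫⁻ y, G t x y ∂μ
            = ∫⁻ y, (if u y ≤ t then (1:ℝ≥0∞) else 0) * k x y ∂μ := by
              apply lintegral_congr; intro y; simp [hG_def, h, h']
          _ = ∫⁻ y in {z | u z ≤ t}, k x y ∂μ :=
              ind_lintegral μ (fun z => u z ≤ t) hIic (k x)
          _ = C x := by
              rw [hμ_def, Measure.restrict_restrict hIic, hBeq, hC_def]
      · have h' : ¬ t < u x := not_lt.mpr h
        rw [if_neg h', if_pos h, one_mul, zero_mul, zero_add]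
        calc ∫⁻ y, G t x y ∂μ
            = ∫⁻ y, (if t < u y then (1:ℝ≥0∞) else 0) * k x y ∂μ := by
              apply lintegral_congr; intro y; simp [hG_def, h, h']
          _ = ∫⁻ y in {z | t < u z}, k x y ∂μ :=
              ind_lintegral μ (fun z => t < u z) hIoi (k x)
          _ = D x := by
              rw [hμ_def, Measure.restrict_restrict hIoi, hAeq, hD_def]
    calc ∫⁻ x, ∫⁻ y, G t x y ∂μ ∂μ
        = ∫⁻ x, ((if t < u x then (1:ℝ≥0∞) else 0) * C x
            + (if u x ≤ t then (1:ℝ≥0∞) else 0) * D x) ∂μ := lintegral_congr inner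
      _ = (∫⁻ x, (if t < u x then (1:ℝ≥0∞) else 0) * C x ∂μ)
            + ∫⁻ x, (if u x ≤ t then (1:ℝ≥0∞) else 0) * D x ∂μ := by
          apply lintegral_add_left
          apply Measurable.mul _ hC
          exact Measurable.ite hIoi measurable_const measurable_const
      _ = (∫⁻ x in {z | t < u z}, C x ∂μ) + ∫⁻ x in {z | u z ≤ t}, D x ∂μ := by
          rw [ind_lintegral μ (fun z => t < u z) hIoi C,
            ind_lintegral μ (fun z => u z ≤ t) hIic D]
      _ = (∫⁻ x in {x | x ∈ Ω ∧ t < u x}, ∫⁻ y in {y | y ∈ Ω ∧ u y ≤ t}, k x y)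
            + ∫⁻ x in {x | x ∈ Ω ∧ u x ≤ t}, ∫⁻ y in {y | y ∈ Ω ∧ t < u y}, k x y := by
          rw [hμ_def, Measure.restrict_restrict hIoi, Measure.restrict_restrict hIic,
            hAeq, hBeq]
  -- step 4 : symmetry
  have step4 : ∀ t : ℝ,
      ∫⁻ x in {x | x ∈ Ω ∧ u x ≤ t}, ∫⁻ y in {y | y ∈ Ω ∧ t < u y}, k x y
        = ∫⁻ x in {x | x ∈ Ω ∧ t < u x}, ∫⁻ y in {y | y ∈ Ω ∧ u y ≤ t}, k x y := by
    intro t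
    rw [lintegral_lintegral_swap hk.aemeasurable]
    apply lintegral_congr; intro a
    apply lintegral_congr; intro b
    exact ksymm b a
  -- put everything together
  rw [step2]
  have hfin : ∫⁻ t, ∫⁻ x, ∫⁻ y, G t x y ∂μ ∂μ ∂lam
      = ∫⁻ t, (2 * ∫⁻ x in {x | x ∈ Ω ∧ t < u x},
          ∫⁻ y in {y | y ∈ Ω ∧ u y ≤ t}, k x y) ∂lam := by
    apply lintegral_congr; intro t
    rw [step3 t, step4 t, two_mul]
  rw [hfin, lintegral_const_mul' 2 _ (by norm_num), ← mul_assoc, one_div,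
    ENNReal.inv_mul_cancel (by norm_num) (by norm_num), one_mul]
end

section
/- Beta function evaluation via the regional fractional Laplacian computation: for s ∈ (0,1), 2 lim_{ε→0⁺} ∫_ε¹ (1 − (1−y²)^s)/y^{1+2s} dy = B(1−s, s) − 1/s, where B is the Euler Beta function. -/
open MeasureTheory

lemma real_beta (s : ℝ) (hs0 : 0 < s) (hs1 : s < 1) :
    ∫ x in (0:ℝ)..1, x ^ (-s) * (1 - x) ^ (s - 1) = Real.Gamma (1 - s) * Real.Gamma s := by
  have hu : 0 < Complex.re ((1 : ℂ) - s) := by simp [hs1]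
  have hv : 0 < Complex.re (s : ℂ) := by simpa using hs0
  have h := Complex.Gamma_mul_Gamma_eq_betaIntegral hu hv
  rw [sub_add_cancel, Complex.Gamma_one, one_mul] at h
  have hβ : Complex.betaIntegral (1 - s) s = ((∫ x in (0:ℝ)..1, x ^ (-s) * (1 - x) ^ (s - 1) : ℝ) : ℂ) := by
    rw [Complex.betaIntegral, ← intervalIntegral.integral_ofReal]
    refine intervalIntegral.integral_congr fun x hx => ?_
    rw [Set.uIcc_of_le (by norm_num : (0:ℝ) ≤ 1)] at hx
    push_cast
    rw [Complex.ofReal_cpow hx.1, Complex.ofReal_cpow (by linarith [hx.2] : (0:ℝ) ≤ 1 - x)]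
    push_cast
    ring_nf
  rw [hβ] at h
  have h2 : ((Real.Gamma (1 - s) * Real.Gamma s : ℝ) : ℂ) = ((∫ x in (0:ℝ)..1, x ^ (-s) * (1 - x) ^ (s - 1) : ℝ) : ℂ) := by
    rw [← h]
    push_cast [← Complex.Gamma_ofReal]
    norm_num
  exact (by exact_mod_cast h2 : _ = _).symm

lemma h_integrable (s : ℝ) (hs0 : 0 < s) (hs1 : s < 1) :
    IntervalIntegrable (fun t : ℝ => t ^ (-s) * (1 - t) ^ (s - 1)) volume 0 1 := by
  have h1 : IntervalIntegrable (fun t : ℝ => t ^ (-s) * (1 - t) ^ (s - 1)) volume 0 (1/2) := by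
    apply IntervalIntegrable.mul_continuousOn
    · exact intervalIntegral.intervalIntegrable_rpow' (by linarith)
    · apply ContinuousOn.rpow_const (by fun_prop)
      intro x hx
      rw [Set.uIcc_of_le (by norm_num : (0:ℝ) ≤ 1/2)] at hx
      left
      have := hx.2
      intro h; rw [sub_eq_zero] at h; linarith
  have h2 : IntervalIntegrable (fun t : ℝ => t ^ (-s) * (1 - t) ^ (s - 1)) volume (1/2) 1 := by
    apply IntervalIntegrable.continuousOn_mul
    · have : IntervalIntegrable (fun t : ℝ => t ^ (s - 1)) volume 0 (1/2) :=
        intervalIntegral.intervalIntegrable_rpow' (by linarith)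
      have := (this.comp_sub_left 1)
      norm_num at this
      exact this.symm
    · apply ContinuousOn.rpow_const (by fun_prop)
      intro x hx
      rw [Set.uIcc_of_le (by norm_num : (1:ℝ)/2 ≤ 1)] at hx
      left
      have := hx.1; intro h; rw [h] at this; norm_num at this
  exact h1.trans h2

lemma g_contOn (s : ℝ) (hs0 : 0 < s) :
    ContinuousOn (fun t : ℝ => (1 - (1 - t) ^ s) * t ^ (-1 - s)) (Set.Ioi 0) := by
  apply ContinuousOn.mul
  · apply ContinuousOn.sub continuousOn_const
    apply ContinuousOn.rpow_const (by fun_prop)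
    intro x _; right; exact hs0.le
  · apply ContinuousOn.rpow_const (by fun_prop)
    intro x hx; left; exact (ne_of_gt hx)

lemma key_eq (s : ℝ) (hs0 : 0 < s) (hs1 : s < 1) (ε : ℝ) (hε : ε ∈ Set.Ioo (0:ℝ) 1) :
    2 * ∫ y in Set.Ioo ε 1, (1 - (1 - y ^ 2) ^ s) / y ^ (1 + 2 * s)
      = -(1/s) - (-(1 - (1 - ε^2) ^ s) * (ε^2) ^ (-s) / s)
        + ∫ t in (ε^2)..1, t ^ (-s) * (1 - t) ^ (s - 1) := by
  obtain ⟨hε0, hε1⟩ := hε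
  set g : ℝ → ℝ := fun t => (1 - (1 - t) ^ s) * t ^ (-1 - s) with hg_def
  set G : ℝ → ℝ := fun t => -(1 - (1 - t) ^ s) * t ^ (-s) / s with hG_def
  set h : ℝ → ℝ := fun t => t ^ (-s) * (1 - t) ^ (s - 1) with hh_def
  have hε2 : (0:ℝ) < ε^2 := by positivity
  have hε21 : ε^2 < 1 := by nlinarith
  -- Step 1 : substitution
  have hsub : (∫ y in ε..1, (2*y) • g (y^2)) = ∫ t in (ε^2)..1, g t := by
    have := intervalIntegral.integral_comp_smul_deriv' (f := fun y : ℝ => y^2)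
      (f' := fun y : ℝ => 2*y) (g := g) (a := ε) (b := 1)
      (fun x _ => by simpa [mul_comm] using hasDerivAt_pow 2 x)
      (by fun_prop)
      ((g_contOn s hs0).mono ?_)
    · simpa using this
    · rintro _ ⟨y, hy, rfl⟩
      rw [Set.uIcc_of_le hε1.le] at hy
      have : 0 < y := lt_of_lt_of_le hε0 hy.1
      simp only [Set.mem_Ioi]
      positivity
  -- Step 2 : pointwise identity
  have hpt : (∫ y in ε..1, (2*y) • g (y^2)) = ∫ y in ε..1, 2 * ((1 - (1 - y ^ 2) ^ s) / y ^ (1 + 2 * s)) := by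
    refine intervalIntegral.integral_congr fun y hy => ?_
    rw [Set.uIcc_of_le hε1.le] at hy
    have hy0 : 0 < y := lt_of_lt_of_le hε0 hy.1
    have h2 : ((y:ℝ)^2 : ℝ) ^ (-1-s) = y ^ ((2:ℝ) * (-1-s)) := by
      rw [← Real.rpow_natCast y 2, ← Real.rpow_mul hy0.le]
      norm_num
    have h3 : y * y ^ ((2:ℝ) * (-1-s)) = y ^ (-(1 + 2*s)) := by
      nth_rewrite 1 [← Real.rpow_one y]
      rw [← Real.rpow_add hy0]
      ring_nf
    simp only [smul_eq_mul, hg_def]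
    rw [h2, div_eq_mul_inv, ← Real.rpow_neg hy0.le]
    rw [← h3]
    ring
  -- Step 3 : FTC
  have hgi : IntervalIntegrable g volume (ε^2) 1 := by
    apply ContinuousOn.intervalIntegrable
    apply (g_contOn s hs0).mono
    rw [Set.uIcc_of_le hε21.le]
    intro x hx; exact lt_of_lt_of_le hε2 hx.1
  have hhi : IntervalIntegrable h volume (ε^2) 1 := by
    apply (h_integrable s hs0 hs1).mono_set
    rw [Set.uIcc_of_le hε21.le, Set.uIcc_of_le (by norm_num : (0:ℝ) ≤ 1)]
    exact Set.Icc_subset_Icc hε2.le le_rfl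
  have hderiv : ∀ t ∈ Set.Ioo (ε^2) 1, HasDerivAt G (g t - h t) t := by
    intro t ht
    have ht0 : 0 < t := lt_trans hε2 ht.1
    have ht1 : t < 1 := ht.2
    have d1 : HasDerivAt (fun t : ℝ => (1 - t) ^ s) ((-1) * s * (1-t) ^ (s-1)) t := by
      have base : HasDerivAt (fun t : ℝ => 1 - t) (-1) t := by
        simpa using (hasDerivAt_id t).const_sub 1
      exact base.rpow_const (Or.inl (by intro hc; rw [sub_eq_zero] at hc; linarith))
    have d2 : HasDerivAt (fun t : ℝ => t ^ (-s)) (-s * t ^ (-s - 1)) t := by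
      simpa using Real.hasDerivAt_rpow_const (p := -s) (Or.inl ht0.ne')
    have d3 : HasDerivAt (fun t : ℝ => -(1 - (1 - t) ^ s) * t ^ (-s))
        (-((-1) * s * (1-t)^(s-1) * (-1)) * t ^ (-s) + -(1 - (1 - t) ^ s) * (-s * t ^ (-s-1))) t := by
      have := ((d1.const_sub 1).neg.mul d2)
      refine this.congr_deriv ?_
      simp only [Pi.neg_apply]
      ring
    have d4 := d3.div_const s
    refine d4.congr_deriv ?_
    simp only [hg_def, hh_def]
    have e1 : t ^ (-1 - s) = t ^ (-s - 1) := by ring_nf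
    rw [e1]
    field_simp
    ring
  have hcont : ContinuousOn G (Set.Icc (ε^2) 1) := by
    apply ContinuousOn.div_const
    apply ContinuousOn.mul
    · apply ContinuousOn.neg
      apply ContinuousOn.sub continuousOn_const
      apply ContinuousOn.rpow_const (by fun_prop)
      intro x _; right; exact hs0.le
    · apply ContinuousOn.rpow_const (by fun_prop)
      intro x hx; left; exact (lt_of_lt_of_le hε2 hx.1).ne'
  have hftc : (∫ t in (ε^2)..1, (g t - h t)) = G 1 - G (ε^2) :=
    intervalIntegral.integral_eq_sub_of_hasDerivAt_of_le hε21.le hcont hderiv (hgi.sub hhi)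
  have hsplit : (∫ t in (ε^2)..1, g t) = (G 1 - G (ε^2)) + ∫ t in (ε^2)..1, h t := by
    rw [← hftc, intervalIntegral.integral_sub hgi hhi]; ring
  have hG1 : G 1 = -(1/s) := by
    simp only [hG_def]
    rw [show (1:ℝ) - 1 = 0 by ring, Real.zero_rpow hs0.ne', Real.one_rpow]
    ring
  -- combine
  have hIoo : (∫ y in Set.Ioo ε 1, (1 - (1 - y ^ 2) ^ s) / y ^ (1 + 2 * s))
      = ∫ y in ε..1, (1 - (1 - y ^ 2) ^ s) / y ^ (1 + 2 * s) := by
    rw [intervalIntegral.integral_of_le hε1.le, MeasureTheory.integral_Ioc_eq_integral_Ioo]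
  rw [hIoo, ← intervalIntegral.integral_const_mul, ← hpt, hsub, hsplit, hG1]

theorem stmt_19 (s : ℝ) (hs0 : 0 < s) (hs1 : s < 1) :
    Filter.Tendsto
      (fun ε : ℝ => 2 * ∫ y in Set.Ioo ε 1, (1 - (1 - y ^ 2) ^ s) / y ^ (1 + 2 * s))
      (nhdsWithin 0 (Set.Ioi 0))
      (nhds (Real.Gamma (1 - s) * Real.Gamma s - 1 / s)) := by
  have hmem : Set.Ioo (0:ℝ) 1 ∈ nhdsWithin 0 (Set.Ioi 0) :=
    Ioo_mem_nhdsGT_of_mem ⟨le_refl 0, one_pos⟩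
  have hev : (fun ε : ℝ => -(1/s) - (-(1 - (1 - ε^2) ^ s) * (ε^2) ^ (-s) / s)
        + ∫ t in (ε^2)..1, t ^ (-s) * (1 - t) ^ (s - 1))
      =ᶠ[nhdsWithin 0 (Set.Ioi 0)]
      (fun ε : ℝ => 2 * ∫ y in Set.Ioo ε 1, (1 - (1 - y ^ 2) ^ s) / y ^ (1 + 2 * s)) := by
    filter_upwards [hmem] with ε hε
    exact (key_eq s hs0 hs1 ε hε).symm
  refine Filter.Tendsto.congr' hev ?_
  -- limit of the primitive term
  have hint : IntegrableOn (fun t : ℝ => t ^ (-s) * (1 - t) ^ (s - 1)) (Set.uIcc 0 1) volume := by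
    rw [Set.uIcc_of_le (by norm_num : (0:ℝ) ≤ 1), integrableOn_Icc_iff_integrableOn_Ioc]
    exact (intervalIntegrable_iff_integrableOn_Ioc_of_le (by norm_num)).mp (h_integrable s hs0 hs1)
  have hF := intervalIntegral.continuousOn_primitive_interval_left hint
  have hF0 : Filter.Tendsto (fun x : ℝ => ∫ t in x..1, t ^ (-s) * (1 - t) ^ (s - 1))
      (nhdsWithin 0 (Set.uIcc 0 1)) (nhds (Real.Gamma (1 - s) * Real.Gamma s)) := by
    have := hF 0 (Set.left_mem_uIcc)
    rw [ContinuousWithinAt] at this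
    rw [real_beta s hs0 hs1] at this
    exact this
  have hsq : Filter.Tendsto (fun ε : ℝ => ε^2) (nhdsWithin 0 (Set.Ioi 0))
      (nhdsWithin 0 (Set.uIcc 0 1)) := by
    apply tendsto_nhdsWithin_of_tendsto_nhds_of_eventually_within
    · have : Filter.Tendsto (fun ε : ℝ => ε^2) (nhds 0) (nhds 0) := by
        simpa using (continuous_pow 2).tendsto (0:ℝ)
      exact this.mono_left nhdsWithin_le_nhds
    · filter_upwards [hmem] with ε hε
      rw [Set.uIcc_of_le (by norm_num : (0:ℝ) ≤ 1)]
      constructor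
      · positivity
      · nlinarith [hε.1, hε.2]
  have hT2 : Filter.Tendsto (fun ε : ℝ => ∫ t in (ε^2)..1, t ^ (-s) * (1 - t) ^ (s - 1))
      (nhdsWithin 0 (Set.Ioi 0)) (nhds (Real.Gamma (1 - s) * Real.Gamma s)) := hF0.comp hsq
  -- limit of the boundary term
  have hT1 : Filter.Tendsto (fun ε : ℝ => -(1 - (1 - ε^2) ^ s) * (ε^2) ^ (-s) / s)
      (nhdsWithin 0 (Set.Ioi 0)) (nhds 0) := by
    have hlow : Filter.Tendsto (fun ε : ℝ => -((ε^2) ^ (1 - s)) / s)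
        (nhdsWithin 0 (Set.Ioi 0)) (nhds 0) := by
      have h1 : Filter.Tendsto (fun x : ℝ => x ^ (1 - s)) (nhds 0) (nhds 0) := by
        have := (Real.continuousAt_rpow_const 0 (1 - s) (Or.inr (by linarith))).tendsto
        rwa [Real.zero_rpow (by intro hc; linarith [sub_eq_zero.mp hc] : (1:ℝ) - s ≠ 0)] at this
      have h2 : Filter.Tendsto (fun ε : ℝ => (ε^2 : ℝ)) (nhds 0) (nhds 0) := by
        simpa using (continuous_pow 2).tendsto (0:ℝ)
      have h3 : Filter.Tendsto (fun ε : ℝ => -((ε^2) ^ (1 - s)) / s) (nhds 0) (nhds (-(0:ℝ)/s)) :=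
        ((h1.comp h2).neg.div_const s)
      have h4 := h3.mono_left (nhdsWithin_le_nhds (s := Set.Ioi 0))
      simpa using h4
    refine tendsto_of_tendsto_of_tendsto_of_le_of_le' hlow tendsto_const_nhds ?_ ?_
    · filter_upwards [hmem] with ε hε
      have hε2 : (0:ℝ) < ε^2 := pow_pos hε.1 2
      have hε21 : ε^2 < 1 := by nlinarith [hε.1, hε.2]
      have hb : 1 - (1 - ε^2) ^ s ≤ ε^2 := by
        have := Real.rpow_le_rpow_of_exponent_ge (x := 1 - ε^2) (by linarith) (by linarith) hs1.le
        rw [Real.rpow_one] at this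
        linarith
      have hpos : (0:ℝ) < (ε^2) ^ (-s) := Real.rpow_pos_of_pos hε2 _
      have key : ε^2 * (ε^2) ^ (-s) = (ε^2) ^ (1 - s) := by
        nth_rewrite 1 [← Real.rpow_one (ε^2)]
        rw [← Real.rpow_add hε2]
        ring_nf
      have hnum : -((ε^2) ^ (1-s)) ≤ -(1 - (1 - ε^2) ^ s) * (ε^2) ^ (-s) := by
        rw [← key]
        nlinarith [mul_le_mul_of_nonneg_right hb hpos.le]
      gcongr
    · filter_upwards [hmem] with ε hε
      have hε2 : (0:ℝ) < ε^2 := pow_pos hε.1 2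
      have hε21 : ε^2 < 1 := by nlinarith [hε.1, hε.2]
      have hle1 : (1 - ε^2) ^ s ≤ 1 := Real.rpow_le_one (by linarith) (by linarith) hs0.le
      have hpos : (0:ℝ) < (ε^2) ^ (-s) := Real.rpow_pos_of_pos hε2 _
      have hnum : -(1 - (1 - ε^2) ^ s) * (ε^2) ^ (-s) ≤ 0 := by nlinarith
      exact div_nonpos_of_nonpos_of_nonneg hnum hs0.le
  have hcomb := (Filter.Tendsto.sub (tendsto_const_nhds (x := -(1/s))) hT1).add hT2
  have hfin : Real.Gamma (1 - s) * Real.Gamma s - 1 / s = -(1/s) - 0 + Real.Gamma (1 - s) * Real.Gamma s := by ring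
  rw [hfin]
  exact hcomb
end
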